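/- arXiv:1207.1753 — 7 statements merged into one kernel-verified Lean document; each statement's English description precedes it below -/
import Mathlib

section
/- For all nonnegative integers d and all i with 0 ≤ i ≤ d, the derivative of b_{d+1}(t) := ∏_{j=0}^{d} (t − θ^{q^j}) evaluated at t = θ^{q^i} equals D_i · ℓ_{d−i}^{q^i}, where D_i := b_i(θ^{q^i}) = ∏_{j=0}^{i-1}(θ^{q^i} − θ^{q^j}) is the Carlitz factorial coefficient and ℓ_e := ∏_{j=1}^{e}(θ − θ^{q^j}). -/
noncomputable section
open Polynomial

variable (Fq : Type) [Field Fq] [Fintype Fq]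

/-- `b_d(t) = ∏_{j=0}^{d-1} (t - θ^{q^j}) ∈ A[t]` where `A = 𝔽_q[θ]`
(the outer variable `X` is `t`, and `θ` is the variable of the inner
polynomial ring). -/
def bcar (d : ℕ) : Polynomial (Polynomial Fq) :=
  ∏ j ∈ Finset.range d, (X - C ((X : Polynomial Fq) ^ (Fintype.card Fq) ^ j))

/-- `D_e := b_e(θ^{q^e}) = ∏_{j=0}^{e-1} (θ^{q^e} - θ^{q^j}) ∈ A`. -/
def Dcar (e : ℕ) : Polynomial Fq :=
  (bcar Fq e).eval ((X : Polynomial Fq) ^ (Fintype.card Fq) ^ e)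

/-- `ℓ_e := ∏_{j=1}^{e} (θ - θ^{q^j}) ∈ A` (so `ℓ_0 = 1`). -/
def lcar (e : ℕ) : Polynomial Fq :=
  ∏ j ∈ Finset.Icc 1 e, ((X : Polynomial Fq) - X ^ (Fintype.card Fq) ^ j)

lemma eval_derivative_prod_X_sub_C {R : Type*} [CommRing R] (s : Finset ℕ) (c : ℕ → R)
    {i : ℕ} (hi : i ∈ s) :
    (Polynomial.derivative (∏ j ∈ s, (X - C (c j)))).eval (c i) =
      ∏ j ∈ s.erase i, (c i - c j) := by
  rw [← Finset.mul_prod_erase s _ hi, derivative_mul]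
  simp [eval_prod]

/-- For all `d ≥ 0` and `0 ≤ i ≤ d`, the derivative of
`b_{d+1}(t) = ∏_{j=0}^{d}(t - θ^{q^j})`, evaluated at `t = θ^{q^i}`,
equals `D_i · ℓ_{d-i}^{q^i}`. -/
theorem derivative_bcar_eval (d i : ℕ) (hi : i ≤ d) :
    (Polynomial.derivative (bcar Fq (d + 1))).eval
        ((X : Polynomial Fq) ^ (Fintype.card Fq) ^ i) =
      Dcar Fq i * lcar Fq (d - i) ^ (Fintype.card Fq) ^ i := by
  classical
  set q := Fintype.card Fq with hq
  obtain ⟨f, hp, hcard⟩ := FiniteField.card Fq (ringChar Fq)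
  set p := ringChar Fq with hpdef
  haveI : Fact p.Prime := ⟨hp⟩
  have key := eval_derivative_prod_X_sub_C (Finset.range (d + 1))
      (fun j => (X : Polynomial Fq) ^ q ^ j) (Finset.mem_range.mpr (Nat.lt_succ_of_le hi))
  rw [bcar, key]
  have hsplit : (Finset.range (d + 1)).erase i =
      (Finset.range i) ∪ (Finset.Ico (i + 1) (d + 1)) := by
    ext j
    simp only [Finset.mem_erase, Finset.mem_range, Finset.mem_union, Finset.mem_Ico]
    omega
  have hdisj : Disjoint (Finset.range i) (Finset.Ico (i + 1) (d + 1)) := by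
    simp only [Finset.disjoint_left, Finset.mem_range, Finset.mem_Ico]
    omega
  rw [hsplit, Finset.prod_union hdisj]
  congr 1
  · rw [Dcar, bcar, eval_prod]
    simp
    rfl
  · rw [lcar, ← Finset.prod_pow]
    rw [show Finset.Ico (i + 1) (d + 1) = Finset.map ⟨fun k => i + k, add_right_injective i⟩
        (Finset.Icc 1 (d - i)) from ?_]
    · rw [Finset.prod_map]
      refine Finset.prod_congr rfl fun k _ => ?_
      have hqi : q ^ i = p ^ ((f : ℕ) * i) := by rw [hq, hcard, ← pow_mul]
      have : ((X : Polynomial Fq) - X ^ q ^ k) ^ q ^ i =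
          (X : Polynomial Fq) ^ q ^ i - (X ^ q ^ k) ^ q ^ i := by
        rw [hqi]; exact sub_pow_char_pow _ _ _
      rw [this, ← pow_mul, ← pow_add]
      simp [Function.Embedding.coeFn_mk, add_comm i k]
    · ext j
      simp only [Finset.mem_Ico, Finset.mem_map, Finset.mem_Icc, Function.Embedding.coeFn_mk]
      constructor
      · intro h; exact ⟨j - i, by omega, by omega⟩
      · rintro ⟨k, hk, rfl⟩; omega
end
end

section
/- For every nonnegative integer d, the normalized Carlitz polynomial satisfies E_d(z) = Σ_{i=0}^{d} z^{q^i} / (D_i · ℓ_{d−i}^{q^i}) in K[z]. -/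
noncomputable section
open Polynomial

variable (Fq : Type) [Field Fq] [Fintype Fq]

/-- The polynomial `∑ i, c i * θ^i` of degree `< d` determined by a coefficient
tuple `c : Fin d → Fq`; as `c` ranges over all tuples this enumerates `A(d)`. -/
def polyOf {d : ℕ} (c : Fin d → Fq) : Polynomial Fq :=
  ∑ i : Fin d, C (c i) * X ^ (i : ℕ)

/-- `D_d`, the product of all monic polynomials of degree `d` in `A = 𝔽_q[θ]`. -/
def Dmonic (d : ℕ) : Polynomial Fq :=
  ∏ c : Fin d → Fq, (X ^ d + polyOf Fq c)

/-- The normalized Carlitz polynomial `E_d(z) = D_d⁻¹ ∏_{a ∈ A(d)} (z - a) ∈ K[z]`. -/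
def Ecar (d : ℕ) : Polynomial (RatFunc Fq) :=
  C (algebraMap (Polynomial Fq) (RatFunc Fq) (Dmonic Fq d))⁻¹ *
    ∏ c : Fin d → Fq, (X - C (algebraMap (Polynomial Fq) (RatFunc Fq) (polyOf Fq c)))

/-!
The polynomial `e_d(z) = ∏_{a ∈ A(d)} (z - a)` is `𝔽_q`-linear, and splitting
`A(d+1) = A(d) + 𝔽_q θ^d` gives `e_{d+1} = e_d^q - D_d^{q-1} e_d`, i.e.
`E_{d+1} = (E_d^q - E_d) / (D_{d+1} / D_d^q)`. Evaluating along the powers of `θ` gives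
`E_d(θ^{d+m}) = h_m(θ, θ^q, …, θ^{q^d})`, the complete homogeneous symmetric polynomial, and
`E_{d+1}(θ^{d+1}) = 1` then forces `D_{d+1} = D_d^q (θ^{q^{d+1}} - θ)`. Hence
`E_{d+1} = (E_d^q - E_d) / (θ^{q^{d+1}} - θ)`, and the claimed coefficients satisfy the same
recursion by a partial-fraction identity.
-/

open Finset

namespace Carlitz

local notation "q" => Fintype.card Fq

section FiniteFieldAlgebra

theorem sub_pow_card_pow {R : Type*} [CommRing R] [Algebra Fq R] (a b : R) (n : ℕ) :
    (a - b) ^ q ^ n = a ^ q ^ n - b ^ q ^ n := by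
  induction n with
  | zero => simp
  | succ n ih =>
    simp only [pow_succ, pow_mul, ih]
    exact map_sub (FiniteField.frobeniusAlgHom Fq R) _ _

theorem sum_smul_X_pow_pow_card {L : Type*} [CommRing L] [Algebra Fq L] (s : Finset ℕ)
    (a : ℕ → L) :
    (∑ i ∈ s, a i • X ^ q ^ i : L[X]) ^ q = ∑ i ∈ s, a i ^ q • X ^ q ^ (i + 1) := by
  have h := map_sum (FiniteField.frobeniusAlgHom Fq L[X]) (fun i => a i • X ^ q ^ i) s
  simp only [FiniteField.coe_frobeniusAlgHom, _root_.smul_pow, ← pow_mul, ← pow_succ] at h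
  exact h

theorem prod_X_sub_C_eq_X_pow_card_sub_X : ∏ t : Fq, (X - C t) = (X ^ q - X : Fq[X]) := by
  have hmonic : (X ^ q - X : Fq[X]).Monic := monic_X_pow_sub (by simpa using Fintype.one_lt_card)
  have hroots := FiniteField.roots_X_pow_card_sub_X Fq
  have hcard : (X ^ q - X : Fq[X]).roots.card = (X ^ q - X : Fq[X]).natDegree := by
    rw [hroots, FiniteField.X_pow_card_sub_X_natDegree_eq Fq Fintype.one_lt_card]
    simp
  rw [← prod_multiset_X_sub_C_of_monic_of_roots_card_eq hmonic hcard, hroots]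
  rfl

theorem prod_sub_C_smul {L : Type*} [Field L] [Algebra Fq L] (Y : L[X]) (α : L) :
    ∏ t : Fq, (Y - C (t • α)) = Y ^ q - C (α ^ (q - 1)) * Y := by
  rcases eq_or_ne α 0 with rfl | hα
  · have : q - 1 ≠ 0 := Nat.sub_ne_zero_of_lt Fintype.one_lt_card
    simp [zero_pow this]
  set Z := C α⁻¹ * Y
  have hfactor : ∀ t : Fq, Y - C (t • α) = C α * (Z - algebraMap Fq L[X] t) := by
    intro t
    simp only [Z, Algebra.smul_def, Polynomial.algebraMap_apply, mul_sub, ← mul_assoc, ← C_mul,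
      mul_inv_cancel₀ hα, C_1, one_mul, mul_comm α]
  have hZ : ∏ t : Fq, (Z - algebraMap Fq L[X] t) = Z ^ q - Z := by
    simpa [map_prod] using congrArg (aeval Z) (prod_X_sub_C_eq_X_pow_card_sub_X Fq)
  rw [Finset.prod_congr rfl fun t _ => hfactor t, prod_mul_distrib, hZ, prod_const, card_univ]
  have hYq : C α ^ q * Z ^ q = Y ^ q := by
    rw [← mul_pow, ← mul_assoc, ← C_mul, mul_inv_cancel₀ hα, C_1, one_mul]
  have hY : C α ^ q * Z = C (α ^ (q - 1)) * Y := by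
    rw [← mul_assoc, ← C_pow, ← C_mul, pow_sub₀ α hα Fintype.card_pos, pow_one]
  rw [mul_sub, hYq, hY]

end FiniteFieldAlgebra

theorem sum_range_smul_shift_sub {R M : Type*} [Ring R] [AddCommGroup M] [Module R M]
    (a b c : ℕ → R) (y : ℕ → M) (n : ℕ) (h0 : c 0 = -b 0)
    (hsucc : ∀ i < n, c (i + 1) = a i - b (i + 1)) (hlast : c (n + 1) = a n) :
    ∑ i ∈ range (n + 1), a i • y (i + 1) - ∑ i ∈ range (n + 1), b i • y i
      = ∑ i ∈ range (n + 1 + 1), c i • y i := by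
  have hmid : ∑ i ∈ range n, c (i + 1) • y (i + 1)
      = ∑ i ∈ range n, (a i • y (i + 1) - b (i + 1) • y (i + 1)) :=
    sum_congr rfl fun i hi => by rw [hsucc i (mem_range.1 hi), sub_smul]
  rw [sum_range_succ' (fun i => c i • y i), sum_range_succ (fun i => c (i + 1) • y (i + 1)), hmid,
    sum_sub_distrib, h0, hlast, sum_range_succ (fun i => a i • y (i + 1)),
    sum_range_succ' (fun i => b i • y i), neg_smul]
  abel

section SubspacePoly

variable {L : Type*} [Field L] [Algebra Fq L] (v : ℕ → L)

def subspacePoly (d : ℕ) : L[X] :=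
  ∏ c : Fin d → Fq, (X - C (∑ i, c i • v i))

@[simp]
theorem subspacePoly_zero : subspacePoly Fq v 0 = X := by
  simp [subspacePoly]

theorem eval_smul_subspacePoly (d : ℕ) (t : Fq) (w : L) :
    (subspacePoly Fq v d).eval (t • w) = t • (subspacePoly Fq v d).eval w := by
  rcases eq_or_ne t 0 with rfl | ht
  · rw [zero_smul, zero_smul, subspacePoly, eval_prod]
    exact prod_eq_zero (mem_univ 0) (by simp)
  -- `c ↦ t • c` permutes the coefficient tuples, and `t ^ (q ^ d) = t`.
  have hfactor : ∀ c : Fin d → Fq, (X - C (∑ i, (t • c) i • v i)).eval (t • w)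
      = t • (X - C (∑ i, c i • v i)).eval w := by
    intro c
    simp only [eval_sub, eval_X, eval_C, Pi.smul_apply, smul_eq_mul, mul_smul, smul_sub,
      Finset.smul_sum]
  calc (subspacePoly Fq v d).eval (t • w)
      = ∏ c : Fin d → Fq, t • (X - C (∑ i, c i • v i)).eval w := by
        rw [subspacePoly, eval_prod]
        refine (Fintype.prod_equiv (MulAction.toPerm (Units.mk0 t ht)) _ _ fun c => ?_).symm
        rw [MulAction.toPerm_apply, Units.smul_mk0, hfactor]
    _ = t • (subspacePoly Fq v d).eval w := by
        rw [← smul_prod, card_univ, Fintype.card_fun, Fintype.card_fin,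
          FiniteField.pow_card_pow, subspacePoly, eval_prod]

theorem subspacePoly_succ_of_comp (d : ℕ)
    (hadd : ∀ w, (subspacePoly Fq v d).comp (X + C w)
      = subspacePoly Fq v d + C ((subspacePoly Fq v d).eval w)) :
    subspacePoly Fq v (d + 1) = subspacePoly Fq v d ^ q
      - C ((subspacePoly Fq v d).eval (v d) ^ (q - 1)) * subspacePoly Fq v d := by
  have hsplit : subspacePoly Fq v (d + 1)
      = ∏ t : Fq, ∏ c : Fin d → Fq, (X - C (∑ i, c i • v i + t • v d)) := by
    rw [subspacePoly, ← Fintype.prod_prod_type',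
      ← (Fin.snocEquiv fun _ => Fq).prod_comp]
    simp [Fin.sum_univ_castSucc]
  have hfiber : ∀ t : Fq, ∏ c : Fin d → Fq, (X - C (∑ i, c i • v i + t • v d))
      = subspacePoly Fq v d - C (t • (subspacePoly Fq v d).eval (v d)) := by
    intro t
    have hshift : ∀ c : Fin d → Fq, X - C (∑ i, c i • v i + t • v d)
        = (X - C (∑ i, c i • v i)).comp (X + C ((-t) • v d)) := by
      intro c
      rw [sub_comp, X_comp, C_comp, neg_smul, C_add, C_neg]
      ring
    rw [prod_congr rfl fun c _ => hshift c, ← Polynomial.prod_comp, ← subspacePoly, hadd,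
      eval_smul_subspacePoly, neg_smul, C_neg, sub_eq_add_neg]
  rw [hsplit, prod_congr rfl fun t _ => hfiber t, prod_sub_C_smul]

theorem subspacePoly_comp_X_add_C (d : ℕ) (w : L) :
    (subspacePoly Fq v d).comp (X + C w)
      = subspacePoly Fq v d + C ((subspacePoly Fq v d).eval w) := by
  induction d generalizing w with
  | zero => simp
  | succ d ih =>
    set P := subspacePoly Fq v d
    have hfrob : (P + C (P.eval w)) ^ q = P ^ q + C (P.eval w ^ q) := by
      rw [C_pow]
      exact map_add (FiniteField.frobeniusAlgHom Fq L[X]) _ _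
    rw [subspacePoly_succ_of_comp Fq v d ih, sub_comp, pow_comp, mul_comp, C_comp, ih, hfrob]
    simp only [eval_sub, eval_pow, eval_mul, eval_C, C_sub, C_mul]
    ring

theorem subspacePoly_succ (d : ℕ) :
    subspacePoly Fq v (d + 1) = subspacePoly Fq v d ^ q
      - C ((subspacePoly Fq v d).eval (v d) ^ (q - 1)) * subspacePoly Fq v d :=
  subspacePoly_succ_of_comp Fq v d (subspacePoly_comp_X_add_C Fq v d)

end SubspacePoly

section CompleteHomogeneous

variable {R S : Type*} [CommRing R] [CommRing S]

/-- `h_m(x_0, …, x_n)`, the sum of all monomials of degree `m` in `x_0, …, x_n`. -/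
def completeHom (x : ℕ → R) : ℕ → ℕ → R
  | 0, m => x 0 ^ m
  | _ + 1, 0 => 1
  | n + 1, m + 1 => completeHom x n (m + 1) + x (n + 1) * completeHom x (n + 1) m

@[simp]
theorem completeHom_zero_right (x : ℕ → R) (n : ℕ) : completeHom x n 0 = 1 := by
  cases n <;> simp [completeHom]

theorem map_completeHom (f : R →+* S) (x : ℕ → R) (n m : ℕ) :
    f (completeHom x n m) = completeHom (f ∘ x) n m := by
  induction n generalizing m with
  | zero => simp [completeHom]
  | succ n ihn =>
    induction m with
    | zero => simp
    | succ m ihm => simp [completeHom, ihn, ihm]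

theorem completeHom_shift_sub (x : ℕ → R) (n m : ℕ) :
    completeHom (fun i => x (i + 1)) n (m + 1) - completeHom x n (m + 1)
      = (x (n + 1) - x 0) * completeHom x (n + 1) m := by
  induction n generalizing m with
  | zero =>
    induction m with
    | zero => simp [completeHom]
    | succ m ihm =>
      simp only [completeHom] at ihm ⊢
      linear_combination x 1 * ihm
  | succ n ihn =>
    induction m with
    | zero =>
      have := ihn 0
      simp only [completeHom, completeHom_zero_right] at this ⊢
      linear_combination this
    | succ m ihm =>
      have := ihn (m + 1)
      simp only [completeHom] at this ihm ⊢
      linear_combination this + x (n + 2) * ihm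

end CompleteHomogeneous

section CarlitzPolynomial

local notation "ι" => algebraMap Fq[X] (RatFunc Fq)

def thetaPow (n : ℕ) : RatFunc Fq := ι (X ^ n)

theorem thetaPow_pow (F : Type) [Field F] (a b : ℕ) : thetaPow F a ^ b = thetaPow F (a * b) := by
  rw [thetaPow, thetaPow, ← map_pow, ← pow_mul]

theorem sum_smul_thetaPow (F : Type) [Field F] {d : ℕ} (c : Fin d → F) :
    ∑ i, c i • thetaPow F i = algebraMap F[X] (RatFunc F) (polyOf F c) := by
  simp [polyOf, thetaPow, Algebra.smul_def]

theorem Ecar_eq_C_mul_subspacePoly (d : ℕ) :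
    Ecar Fq d = C (ι (Dmonic Fq d))⁻¹ * subspacePoly Fq (thetaPow Fq) d := by
  simp only [Ecar, subspacePoly, sum_smul_thetaPow]

theorem Dmonic_ne_zero (d : ℕ) : Dmonic Fq d ≠ 0 := by
  refine prod_ne_zero_iff.2 fun c _ => (monic_X_pow_add ?_).ne_zero
  refine (degree_sum_le _ _).trans_lt ((Finset.sup_lt_iff (WithBot.bot_lt_coe d)).2 fun i _ => ?_)
  exact (degree_C_mul_X_pow_le _ _).trans_lt (WithBot.coe_lt_coe.2 i.isLt)

theorem Ecar_zero : Ecar Fq 0 = X := by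
  simp [Ecar, Dmonic, polyOf]

theorem algebraMap_Dmonic_zero : ι (Dmonic Fq 0) = 1 := by
  simp [Dmonic, polyOf]

theorem algebraMap_Dmonic_ne_zero (d : ℕ) : ι (Dmonic Fq d) ≠ 0 :=
  RatFunc.algebraMap_ne_zero (Dmonic_ne_zero Fq d)

theorem eval_subspacePoly_thetaPow_self (d : ℕ) :
    (subspacePoly Fq (thetaPow Fq) d).eval (thetaPow Fq d) = ι (Dmonic Fq d) := by
  rw [subspacePoly, eval_prod, Dmonic, map_prod]
  refine Fintype.prod_equiv (Equiv.neg _) _ _ fun c => ?_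
  rw [eval_sub, eval_X, eval_C, sum_smul_thetaPow, thetaPow, Equiv.neg_apply, map_add,
    sub_eq_add_neg, ← map_neg]
  congr
  simp [polyOf]

theorem eval_Ecar_thetaPow_self (d : ℕ) : (Ecar Fq d).eval (thetaPow Fq d) = 1 := by
  rw [Ecar_eq_C_mul_subspacePoly, eval_mul, eval_C, eval_subspacePoly_thetaPow_self,
    inv_mul_cancel₀ (algebraMap_Dmonic_ne_zero Fq d)]

theorem Ecar_succ_eq_C_mul (d : ℕ) :
    Ecar Fq (d + 1)
      = C (ι (Dmonic Fq (d + 1)) / ι (Dmonic Fq d) ^ q)⁻¹ * (Ecar Fq d ^ q - Ecar Fq d) := by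
  have hP : subspacePoly Fq (thetaPow Fq) d = C (ι (Dmonic Fq d)) * Ecar Fq d := by
    rw [Ecar_eq_C_mul_subspacePoly, ← mul_assoc, ← C_mul,
      mul_inv_cancel₀ (algebraMap_Dmonic_ne_zero Fq d), C_1, one_mul]
  rw [Ecar_eq_C_mul_subspacePoly Fq (d + 1), subspacePoly_succ, eval_subspacePoly_thetaPow_self,
    hP, mul_pow, ← C_pow, ← mul_assoc, ← C_mul, pow_sub_one_mul Fintype.card_ne_zero, inv_div,
    div_eq_mul_inv]
  simp only [C_mul]
  ring

theorem thetaPow_injective (F : Type) [Field F] : Function.Injective (thetaPow F) := by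
  intro a b h
  simpa using congrArg natDegree (RatFunc.algebraMap_injective F h)

def thetaFrob (i : ℕ) : RatFunc Fq := thetaPow Fq (q ^ i)

theorem thetaFrob_pow_card (i : ℕ) : thetaFrob Fq i ^ q = thetaFrob Fq (i + 1) := by
  rw [thetaFrob, thetaFrob, thetaPow_pow, pow_succ]

theorem thetaFrob_sub_ne_zero {i j : ℕ} (h : i ≠ j) : thetaFrob Fq i - thetaFrob Fq j ≠ 0 :=
  sub_ne_zero.2 <| (thetaPow_injective Fq).ne <| (Nat.pow_right_injective Fintype.one_lt_card).ne h

theorem completeHom_thetaFrob_pow_card_sub (n m : ℕ) :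
    completeHom (thetaFrob Fq) n (m + 1) ^ q - completeHom (thetaFrob Fq) n (m + 1)
      = (thetaFrob Fq (n + 1) - thetaFrob Fq 0) * completeHom (thetaFrob Fq) (n + 1) m := by
  have hfrob : completeHom (thetaFrob Fq) n (m + 1) ^ q
      = completeHom (fun i => thetaFrob Fq (i + 1)) n (m + 1) :=
    (map_completeHom (FiniteField.frobeniusAlgHom Fq (RatFunc Fq)).toRingHom _ n (m + 1)).trans
      (congrArg (completeHom · n (m + 1)) (funext (thetaFrob_pow_card Fq)))
  rw [hfrob, completeHom_shift_sub]

theorem algebraMap_Dmonic_succ_of_eval (d : ℕ)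
    (h : ∀ m, (Ecar Fq d).eval (thetaPow Fq (d + m)) = completeHom (thetaFrob Fq) d m) :
    ι (Dmonic Fq (d + 1)) = ι (Dmonic Fq d) ^ q * (thetaFrob Fq (d + 1) - thetaFrob Fq 0) := by
  have h1 := eval_Ecar_thetaPow_self Fq (d + 1)
  rw [Ecar_succ_eq_C_mul, eval_mul, eval_C, eval_sub, eval_pow, h 1,
    completeHom_thetaFrob_pow_card_sub, completeHom_zero_right, mul_one,
    inv_mul_eq_one₀ (div_ne_zero (algebraMap_Dmonic_ne_zero Fq _)
      (pow_ne_zero _ (algebraMap_Dmonic_ne_zero Fq _))),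
    div_eq_iff (pow_ne_zero _ (algebraMap_Dmonic_ne_zero Fq _))] at h1
  rw [h1, mul_comm]

theorem eval_Ecar_thetaPow (d m : ℕ) :
    (Ecar Fq d).eval (thetaPow Fq (d + m)) = completeHom (thetaFrob Fq) d m := by
  induction d generalizing m with
  | zero => simp [Ecar_zero, completeHom, thetaFrob, thetaPow_pow]
  | succ d ih =>
    have hδ := thetaFrob_sub_ne_zero Fq (by omega : d + 1 ≠ 0)
    rw [Ecar_succ_eq_C_mul, algebraMap_Dmonic_succ_of_eval Fq d ih, eval_mul, eval_C, eval_sub,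
      eval_pow, show d + 1 + m = d + (m + 1) by omega, ih, completeHom_thetaFrob_pow_card_sub,
      mul_div_cancel_left₀ _ (pow_ne_zero _ (algebraMap_Dmonic_ne_zero Fq d)),
      inv_mul_cancel_left₀ hδ]

theorem algebraMap_Dmonic_succ (d : ℕ) :
    ι (Dmonic Fq (d + 1)) = ι (Dmonic Fq d) ^ q * (thetaFrob Fq (d + 1) - thetaFrob Fq 0) :=
  algebraMap_Dmonic_succ_of_eval Fq d (eval_Ecar_thetaPow Fq d)

theorem Ecar_succ (d : ℕ) :
    Ecar Fq (d + 1)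
      = C (thetaFrob Fq (d + 1) - thetaFrob Fq 0)⁻¹ * (Ecar Fq d ^ q - Ecar Fq d) := by
  rw [Ecar_succ_eq_C_mul, algebraMap_Dmonic_succ,
    mul_div_cancel_left₀ _ (pow_ne_zero _ (algebraMap_Dmonic_ne_zero Fq d))]

theorem lcar_zero : lcar Fq 0 = 1 := by
  simp [lcar]

theorem algebraMap_lcar_pow (e i : ℕ) :
    ι (lcar Fq e) ^ q ^ i = ∏ j ∈ Icc 1 e, (thetaFrob Fq i - thetaFrob Fq (i + j)) := by
  rw [lcar, map_prod, ← prod_pow]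
  refine prod_congr rfl fun j _ => ?_
  rw [map_sub, sub_pow_card_pow, ← map_pow, ← map_pow, ← pow_mul, thetaFrob, thetaFrob, thetaPow,
    thetaPow, ← pow_add, add_comm j]

theorem algebraMap_lcar_ne_zero (e : ℕ) : ι (lcar Fq e) ≠ 0 := by
  have h := algebraMap_lcar_pow Fq e 0
  rw [pow_zero, pow_one] at h
  rw [h, prod_ne_zero_iff]
  exact fun j hj => thetaFrob_sub_ne_zero Fq (by rw [mem_Icc] at hj; omega)

theorem algebraMap_lcar_succ_pow (e i : ℕ) :
    ι (lcar Fq (e + 1)) ^ q ^ i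
      = ι (lcar Fq e) ^ q ^ i * (thetaFrob Fq i - thetaFrob Fq (i + e + 1)) := by
  rw [algebraMap_lcar_pow, algebraMap_lcar_pow, prod_Icc_succ_top (by omega), add_assoc]

def carlitzCoeff (d i : ℕ) : RatFunc Fq := (ι (Dmonic Fq i * lcar Fq (d - i) ^ q ^ i))⁻¹

theorem carlitzCoeff_succ_zero (d : ℕ) :
    carlitzCoeff Fq (d + 1) 0
      = -((thetaFrob Fq (d + 1) - thetaFrob Fq 0)⁻¹ * carlitzCoeff Fq d 0) := by
  have h := algebraMap_lcar_succ_pow Fq d 0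
  simp only [pow_zero, pow_one, zero_add] at h
  rw [carlitzCoeff, carlitzCoeff, Nat.sub_zero, Nat.sub_zero, pow_zero, pow_one, pow_one, map_mul,
    map_mul, algebraMap_Dmonic_zero, h, one_mul, one_mul, ← neg_sub (thetaFrob Fq (d + 1)),
    mul_neg, inv_neg, mul_inv]
  ring

theorem carlitzCoeff_succ_self (d : ℕ) :
    carlitzCoeff Fq (d + 1) (d + 1)
      = (thetaFrob Fq (d + 1) - thetaFrob Fq 0)⁻¹ * carlitzCoeff Fq d d ^ q := by
  rw [carlitzCoeff, carlitzCoeff, Nat.sub_self, Nat.sub_self, lcar_zero, one_pow, one_pow, mul_one,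
    mul_one, algebraMap_Dmonic_succ, mul_inv, inv_pow, mul_comm]

theorem carlitzCoeff_succ_succ {d i : ℕ} (hi : i < d) :
    carlitzCoeff Fq (d + 1) (i + 1)
      = (thetaFrob Fq (d + 1) - thetaFrob Fq 0)⁻¹ * carlitzCoeff Fq d i ^ q
        - (thetaFrob Fq (d + 1) - thetaFrob Fq 0)⁻¹ * carlitzCoeff Fq d (i + 1) := by
  obtain ⟨e, rfl⟩ : ∃ e, d = i + 1 + e := ⟨d - (i + 1), by omega⟩
  have hD := pow_ne_zero q (algebraMap_Dmonic_ne_zero Fq i)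
  have hL := pow_ne_zero (q ^ (i + 1)) (algebraMap_lcar_ne_zero Fq e)
  have hu := thetaFrob_sub_ne_zero Fq (by omega : i + 1 ≠ 0)
  have hv := thetaFrob_sub_ne_zero Fq (by omega : i + 1 ≠ i + 1 + e + 1)
  have hδ := thetaFrob_sub_ne_zero Fq (by omega : i + 1 + e + 1 ≠ 0)
  rw [carlitzCoeff, carlitzCoeff, carlitzCoeff, show i + 1 + e + 1 - (i + 1) = e + 1 by omega,
    show i + 1 + e - i = e + 1 by omega, show i + 1 + e - (i + 1) = e by omega]
  simp only [map_mul, map_pow, inv_pow, mul_pow, ← pow_mul, ← pow_succ]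
  rw [algebraMap_lcar_succ_pow, algebraMap_Dmonic_succ]
  field_simp
  ring

end CarlitzPolynomial

end Carlitz

/-- **Explicit expansion of the normalized Carlitz polynomial.**
For every `d ≥ 0`, in `K[z]` one has `E_d(z) = ∑_{i=0}^{d} z^{q^i} / (D_i · ℓ_{d-i}^{q^i})`. -/
theorem Ecar_eq_sum (d : ℕ) :
    Ecar Fq d =
      ∑ i ∈ Finset.range (d + 1),
        C (algebraMap (Polynomial Fq) (RatFunc Fq)
              (Dmonic Fq i * lcar Fq (d - i) ^ (Fintype.card Fq) ^ i))⁻¹ *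
          X ^ (Fintype.card Fq) ^ i := by
  simp only [C_mul']
  change Ecar Fq d
    = ∑ i ∈ Finset.range (d + 1), Carlitz.carlitzCoeff Fq d i • X ^ Fintype.card Fq ^ i
  induction d with
  | zero => simp [Carlitz.Ecar_zero, Carlitz.carlitzCoeff, Carlitz.algebraMap_Dmonic_zero,
      Carlitz.lcar_zero]
  | succ d ih =>
    rw [Carlitz.Ecar_succ, ih, C_mul', Carlitz.sum_smul_X_pow_pow_card, smul_sub, smul_sum,
      smul_sum]
    simp only [smul_smul]
    exact Carlitz.sum_range_smul_shift_sub _ _ _ (fun i => X ^ Fintype.card Fq ^ i) d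
      (Carlitz.carlitzCoeff_succ_zero Fq d) (fun i hi => Carlitz.carlitzCoeff_succ_succ Fq hi)
      (Carlitz.carlitzCoeff_succ_self Fq d)
end
end

section
/- Every rigid analytic function φ ∈ 𝕋 (power series over ℂ_∞ converging on the closed unit disc) satisfying the difference equation τ(φ) = (t − θ)·φ, where τ raises coefficients to the q-th power, is an 𝔽_q[t]-multiple of the Anderson–Thakur function ω(t) := ι · ∏_{j≥0} (1 − t/θ^{q^j})^{-1}; i.e., the solution set is the free rank-one 𝔽_q[t]-module generated by ω. -/
/-!
Write `P_N` for the partial products of `ω` and `g_N` for the geometric series of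
`(1 - t/θ^{q^N})⁻¹`. Since `τ` shifts the factors `g_j` and `ι^{q-1} = -θ` gives
`(t - θ) ι g_0 = ι^q`, one gets `τ(P_N) = (t - θ) P_N g_N`; as `g_N → 1` coefficientwise,
`τ(ω) = (t - θ) ω`. Because `ω(0) = ι ≠ 0`, `ω` is a unit, so every `φ` is `f ω`, and the
difference equation for `φ` becomes `τ(f) = f`: the coefficients of `f` lie in `𝔽_q`. The
coefficients of `ω` are bounded by `|ι| q^{-k}`, so when `f_n ≠ 0` the term `f_n ι` dominates
the `n`-th coefficient of `f ω`, which then has norm `|ι|`; hence `φ ∈ 𝕋` forces `f` to be a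
polynomial. The same bound shows `p ω ∈ 𝕋` for every `p ∈ 𝔽_q[t]`.
-/

noncomputable section
open Polynomial Filter

variable (Fq : Type) [Field Fq] [Fintype Fq]
variable (Cinf : Type) [NontriviallyNormedField Cinf] [CompleteSpace Cinf]
  [IsAlgClosed Cinf] [IsUltrametricDist Cinf] [Algebra Fq Cinf]

/-- The Frobenius twist `τ` on the Tate algebra, acting on (power series)
coefficients by the `q`-power map. -/
def tw (φ : PowerSeries Cinf) : PowerSeries Cinf :=
  PowerSeries.mk fun n => (PowerSeries.coeff n φ) ^ (Fintype.card Fq)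

/-- Membership in the Tate algebra `𝕋`: a power series over `ℂ_∞` lies in `𝕋`
iff its coefficients tend to `0`, i.e. it converges on the closed unit disc. -/
def IsTate (φ : PowerSeries Cinf) : Prop :=
  Tendsto (fun n => PowerSeries.coeff n φ) atTop (nhds 0)

/-- Convergence of a sequence of power series with respect to the Gauss norm. -/
def GaussTendsto (F : ℕ → PowerSeries Cinf) (φ : PowerSeries Cinf) : Prop :=
  ∀ ε > (0 : ℝ), ∃ N, ∀ m ≥ N, ∀ n : ℕ, ‖PowerSeries.coeff n (F m - φ)‖ < ε

/-- The `N`-th partial product `ι ∏_{j<N} (1 - t/θ^{q^j})⁻¹` of the Anderson–Thakur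
function, each factor expanded as the geometric series `∑_n θ^{-n q^j} t^n ∈ 𝕋`. -/
def omegaPartial (θc ι : Cinf) (N : ℕ) : PowerSeries Cinf :=
  PowerSeries.C ι *
    ∏ j ∈ Finset.range N, PowerSeries.mk fun n => ((θc ^ (Fintype.card Fq) ^ j)⁻¹) ^ n

open PowerSeries
open scoped Topology PowerSeries.WithPiTopology

theorem FiniteField.exists_algebraMap_eq_of_pow_card_eq {K L : Type*} [Field K] [Fintype K]
    [Field L] [Algebra K L] {x : L} (hx : x ^ Fintype.card K = x) :
    ∃ a : K, algebraMap K L a = x := by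
  have hroots := Polynomial.roots_map_of_injective_of_card_eq_natDegree
    (algebraMap K L).injective (p := (Polynomial.X ^ Fintype.card K - Polynomial.X : K[X])) (by
      rw [FiniteField.roots_X_pow_card_sub_X,
        FiniteField.X_pow_card_sub_X_natDegree_eq K Fintype.one_lt_card]
      rfl)
  rw [Polynomial.map_sub, Polynomial.map_pow, Polynomial.map_X] at hroots
  have hx_root : x ∈ (Polynomial.X ^ Fintype.card K - Polynomial.X : L[X]).roots := by
    rw [Polynomial.mem_roots (FiniteField.X_pow_card_sub_X_ne_zero L Fintype.one_lt_card)]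
    simp [hx]
  rw [← hroots] at hx_root
  obtain ⟨a, -, ha⟩ := Multiset.mem_map.1 hx_root
  exact ⟨a, ha⟩

theorem FiniteField.norm_algebraMap_eq_one {K L : Type*} [Field K] [Fintype K]
    [NormedDivisionRing L] [Algebra K L] {a : K} (ha : a ≠ 0) : ‖algebraMap K L a‖ = 1 := by
  refine (pow_eq_one_iff_of_nonneg (norm_nonneg _)
    (Nat.sub_ne_zero_of_lt (Fintype.one_lt_card (α := K)))).1 ?_
  rw [← norm_pow, ← map_pow, FiniteField.pow_card_sub_one_eq_one a ha, map_one, norm_one]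

theorem FiniteField.norm_algebraMap_le_one {K L : Type*} [Field K] [Fintype K]
    [NormedDivisionRing L] [Algebra K L] (a : K) : ‖algebraMap K L a‖ ≤ 1 := by
  rcases eq_or_ne a 0 with rfl | ha
  · simp
  · exact (norm_algebraMap_eq_one ha).le

namespace PowerSeries

theorem mk_pow_mul_one_sub_C_mul_X {R : Type*} [CommRing R] (r : R) :
    mk (r ^ ·) * (1 - C r * X) = 1 := by
  simpa [rescale_mk] using congrArg (rescale r) (mk_one_mul_one_sub_eq_one R)

variable {R : Type*}

theorem norm_coeff_mul_le [NormedRing R] [IsUltrametricDist R] {f g : R⟦X⟧} {a A B : ℝ}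
    (ha : 0 ≤ a) (hf : ∀ k, ‖coeff k f‖ ≤ A * a ^ k) (hg : ∀ k, ‖coeff k g‖ ≤ B * a ^ k)
    (n : ℕ) : ‖coeff n (f * g)‖ ≤ A * B * a ^ n := by
  have hA : 0 ≤ A := by simpa using (norm_nonneg _).trans (hf 0)
  have hB : 0 ≤ B := by simpa using (norm_nonneg _).trans (hg 0)
  rw [coeff_mul]
  refine IsUltrametricDist.norm_sum_le_of_forall_le_of_nonneg (by positivity) fun ij hij => ?_
  rw [← Finset.HasAntidiagonal.mem_antidiagonal.1 hij, pow_add, mul_mul_mul_comm]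
  exact (norm_mul_le _ _).trans (mul_le_mul (hf _) (hg _) (norm_nonneg _) (by positivity))

theorem norm_coeff_mul_eq_of_norm_coeff_eq_one [NormedDivisionRing R] [IsUltrametricDist R]
    {f w : R⟦X⟧} (hf : ∀ k, ‖coeff k f‖ ≤ 1)
    (hw : ∀ k, 0 < k → ‖coeff k w‖ < ‖coeff 0 w‖) {n : ℕ} (hn : ‖coeff n f‖ = 1) :
    ‖coeff n (f * w)‖ = ‖coeff 0 w‖ := by
  have hlow : ‖∑ k ∈ Finset.range n, coeff k f * coeff (n - k) w‖ < ‖coeff 0 w‖ := by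
    rcases (Finset.range n).eq_empty_or_nonempty with hn0 | hne
    · simpa [hn0] using (norm_nonneg _).trans_lt (hw 1 one_pos)
    obtain ⟨k, hk, hle⟩ := IsUltrametricDist.exists_norm_finsetSum_le_of_nonempty hne
      (fun k => coeff k f * coeff (n - k) w)
    refine hle.trans_lt ?_
    rw [norm_mul]
    calc ‖coeff k f‖ * ‖coeff (n - k) w‖ ≤ 1 * ‖coeff (n - k) w‖ := by gcongr; exact hf k
      _ < ‖coeff 0 w‖ := by rw [one_mul]; exact hw _ (Nat.sub_pos_of_lt (Finset.mem_range.1 hk))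
  rw [coeff_mul, Finset.Nat.sum_antidiagonal_eq_sum_range_succ
    (fun i j => coeff i f * coeff j w), Finset.sum_range_succ, Nat.sub_self,
    IsUltrametricDist.norm_add_eq_max_of_norm_ne_norm] <;> rw [norm_mul, hn, one_mul]
  · exact max_eq_right hlow.le
  · exact hlow.ne

end PowerSeries

theorem Polynomial.norm_coeff_map_algebraMap_le {K L : Type*} [Field K] [Fintype K]
    [NormedDivisionRing L] [Algebra K L] (p : K[X]) {a : ℝ} (ha0 : 0 < a) (ha1 : a ≤ 1)
    (k : ℕ) : ‖(p.map (algebraMap K L)).coeff k‖ ≤ (a ^ p.natDegree)⁻¹ * a ^ k := by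
  rw [Polynomial.coeff_map]
  rcases le_or_gt k p.natDegree with hk | hk
  · calc ‖algebraMap K L (p.coeff k)‖ ≤ 1 := FiniteField.norm_algebraMap_le_one _
      _ = (a ^ p.natDegree)⁻¹ * a ^ p.natDegree := (inv_mul_cancel₀ (by positivity)).symm
      _ ≤ (a ^ p.natDegree)⁻¹ * a ^ k :=
        mul_le_mul_of_nonneg_left (pow_le_pow_of_le_one ha0.le ha1 hk) (by positivity)
  · rw [Polynomial.coeff_eq_zero_of_natDegree_lt hk, map_zero, norm_zero]
    positivity

section Twist

variable {K : Type} [Fintype K] {L : Type} [NontriviallyNormedField L]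

variable (K) in
theorem continuous_tw : Continuous (tw K L) := by
  refine continuous_iff_continuousAt.2 fun φ => ?_
  rw [ContinuousAt, WithPiTopology.tendsto_iff_coeff_tendsto]
  intro d
  simpa [tw] using ((WithPiTopology.continuous_coeff L d).tendsto φ).pow (Fintype.card K)

variable [Field K] [Algebra K L]

theorem tw_eq_map (φ : L⟦X⟧) :
    tw K L φ = PowerSeries.map (FiniteField.frobeniusAlgHom K L : L →+* L) φ := by
  ext n
  simp [tw]

theorem tw_mul (φ ψ : L⟦X⟧) : tw K L (φ * ψ) = tw K L φ * tw K L ψ := by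
  simp only [tw_eq_map, map_mul]

theorem tw_C (c : L) : tw K L (PowerSeries.C c) = PowerSeries.C (c ^ Fintype.card K) := by
  rw [tw_eq_map, PowerSeries.map_C]
  rfl

theorem tw_coe_map_algebraMap (p : K[X]) :
    tw K L (p.map (algebraMap K L) : L⟦X⟧) = p.map (algebraMap K L) := by
  ext n
  simp [tw, ← map_pow, FiniteField.pow_card]

theorem exists_map_algebraMap_eq_of_tw_eq_self {f : L⟦X⟧} (hf : tw K L f = f) :
    ∃ g : K⟦X⟧, PowerSeries.map (algebraMap K L) g = f := by
  choose a ha using fun n => FiniteField.exists_algebraMap_eq_of_pow_card_eq (K := K)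
    (by simpa [tw] using congrArg (PowerSeries.coeff n) hf)
  exact ⟨mk a, by ext n; simp [ha]⟩

theorem tw_mul_eq_iff {a ω : L⟦X⟧} (hω : tw K L ω = a * ω) (h : a * ω ≠ 0) (f : L⟦X⟧) :
    tw K L (f * ω) = a * (f * ω) ↔ tw K L f = f := by
  rw [tw_mul, hω, mul_left_comm a f ω, mul_left_inj' h]

end Twist

section Tate

variable {L : Type} [NontriviallyNormedField L]

theorem isTate_of_norm_coeff_le {φ : L⟦X⟧} {a A : ℝ} (ha0 : 0 ≤ a) (ha1 : a < 1)
    (h : ∀ n, ‖coeff n φ‖ ≤ A * a ^ n) : IsTate L φ :=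
  squeeze_zero_norm h (by simpa using (tendsto_pow_atTop_nhds_zero_of_lt_one ha0 ha1).const_mul A)

theorem exists_coe_eq_of_isTate_map_mul {K : Type} [Field K] [Fintype K] [Algebra K L]
    [IsUltrametricDist L] {g : K⟦X⟧} {w : L⟦X⟧}
    (hw : ∀ k, 0 < k → ‖coeff k w‖ < ‖coeff 0 w‖)
    (hT : IsTate L (PowerSeries.map (algebraMap K L) g * w)) : ∃ p : K[X], (p : K⟦X⟧) = g := by
  obtain ⟨d, hd⟩ := eventually_atTop.1 <| (tendsto_zero_iff_norm_tendsto_zero.1 hT).eventually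
    (gt_mem_nhds ((norm_nonneg _).trans_lt (hw 1 one_pos)))
  have hvanish : ∀ n, d ≤ n → coeff n g = 0 := fun n hn => by
    by_contra hg
    refine (hd n hn).ne (norm_coeff_mul_eq_of_norm_coeff_eq_one (fun k => ?_) hw ?_)
    · simpa using FiniteField.norm_algebraMap_le_one (L := L) (coeff k g)
    · simpa using FiniteField.norm_algebraMap_eq_one (L := L) hg
  refine ⟨trunc d g, ?_⟩
  ext n
  rw [Polynomial.coeff_coe, coeff_trunc]
  split_ifs with h
  · rfl
  · exact (hvanish n (not_lt.1 h)).symm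

theorem GaussTendsto.tendsto {F : ℕ → L⟦X⟧} {φ : L⟦X⟧} (h : GaussTendsto L F φ) :
    Tendsto F atTop (𝓝 φ) := by
  refine (WithPiTopology.tendsto_iff_coeff_tendsto _ _ _ _).2 fun n => ?_
  refine Metric.tendsto_atTop.2 fun ε hε => ?_
  obtain ⟨N, hN⟩ := h ε hε
  exact ⟨N, fun m hm => by simpa [dist_eq_norm] using hN m hm n⟩

end Tate

section Omega

variable {K : Type} [Fintype K] {L : Type} [NontriviallyNormedField L] {θc ι : L}

local notation "q" => Fintype.card K

variable (K) in
def omegaFactor (θc : L) (j : ℕ) : L⟦X⟧ :=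
  mk fun n => ((θc ^ q ^ j)⁻¹) ^ n

theorem omegaPartial_zero : omegaPartial K L θc ι 0 = PowerSeries.C ι := by
  simp [omegaPartial]

theorem omegaPartial_succ (N : ℕ) :
    omegaPartial K L θc ι (N + 1) = omegaPartial K L θc ι N * omegaFactor K θc N := by
  rw [omegaPartial, omegaPartial, Finset.prod_range_succ, mul_assoc]
  rfl

theorem tw_omegaFactor (j : ℕ) : tw K L (omegaFactor K θc j) = omegaFactor K θc (j + 1) := by
  ext n
  simp only [tw, omegaFactor, coeff_mk, inv_pow, ← pow_mul, pow_succ]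
  congr 2
  ring

variable {ω : L⟦X⟧}

theorem coeff_zero_omega (hω : Tendsto (omegaPartial K L θc ι) atTop (𝓝 ω)) :
    coeff 0 ω = ι := by
  refine tendsto_nhds_unique (((WithPiTopology.continuous_coeff L 0).tendsto ω).comp hω) ?_
  simp [Function.comp_def, omegaPartial, ← coeff_zero_eq_constantCoeff_apply]

variable [Field K]

theorem X_sub_C_mul_C_mul_omegaFactor_zero (hθ0 : θc ≠ 0) (hι : ι ^ (q - 1) + θc = 0) :
    (PowerSeries.X - PowerSeries.C θc) * PowerSeries.C ι * omegaFactor K θc 0 =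
      PowerSeries.C (ι ^ q) := by
  have hgeom : omegaFactor K θc 0 * (1 - PowerSeries.C θc⁻¹ * PowerSeries.X) = 1 := by
    rw [omegaFactor, pow_zero, pow_one]
    exact mk_pow_mul_one_sub_C_mul_X θc⁻¹
  have hιq : ι ^ q = -θc * ι := by
    rw [← pow_sub_one_mul Fintype.card_ne_zero, eq_neg_of_add_eq_zero_left hι]
  have hθθ : PowerSeries.C θc * PowerSeries.C θc⁻¹ = (1 : L⟦X⟧) := by
    rw [← map_mul, mul_inv_cancel₀ hθ0, map_one]
  rw [hιq, map_mul, map_neg]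
  linear_combination (-PowerSeries.C θc * PowerSeries.C ι) * hgeom -
    PowerSeries.X * PowerSeries.C ι * omegaFactor K θc 0 * hθθ

theorem tw_omegaPartial [Algebra K L] (hθ0 : θc ≠ 0) (hι : ι ^ (q - 1) + θc = 0)
    (N : ℕ) : tw K L (omegaPartial K L θc ι N) =
      (PowerSeries.X - PowerSeries.C θc) * omegaPartial K L θc ι N * omegaFactor K θc N := by
  induction N with
  | zero => rw [omegaPartial_zero, tw_C, X_sub_C_mul_C_mul_omegaFactor_zero hθ0 hι]
  | succ N ih => rw [omegaPartial_succ, tw_mul, ih, tw_omegaFactor]; ring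

theorem tendsto_omegaFactor (hθ : 1 < ‖θc‖) : Tendsto (omegaFactor K θc) atTop (𝓝 1) := by
  have hr : Tendsto (fun N => (θc ^ q ^ N)⁻¹) atTop (𝓝 0) := by
    simp_rw [← inv_pow]
    exact (tendsto_pow_atTop_nhds_zero_of_norm_lt_one
      (by simpa using inv_lt_one_of_one_lt₀ hθ)).comp
      (tendsto_pow_atTop_atTop_of_one_lt (Fintype.one_lt_card (α := K)))
  refine (WithPiTopology.tendsto_iff_coeff_tendsto _ _ _ _).2 fun n => ?_
  simpa [omegaFactor, PowerSeries.coeff_one, zero_pow_eq] using hr.pow n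

theorem tw_omega [Algebra K L] (hθ : 1 < ‖θc‖) (hι : ι ^ (q - 1) + θc = 0)
    (hω : Tendsto (omegaPartial K L θc ι) atTop (𝓝 ω)) :
    tw K L ω = (PowerSeries.X - PowerSeries.C θc) * ω := by
  have hθ0 : θc ≠ 0 := norm_pos_iff.1 (one_pos.trans hθ)
  have hrhs := (hω.const_mul (PowerSeries.X - PowerSeries.C θc)).mul
    (tendsto_omegaFactor (K := K) hθ)
  rw [mul_one] at hrhs
  refine tendsto_nhds_unique ?_ hrhs
  simpa [Function.comp_def, tw_omegaPartial hθ0 hι] using ((continuous_tw K).tendsto ω).comp hω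

theorem norm_coeff_omegaFactor_le (hθ : (q : ℝ) ≤ ‖θc‖) (j k : ℕ) :
    ‖coeff k (omegaFactor K θc j)‖ ≤ 1 * ((q : ℝ)⁻¹) ^ k := by
  have hq : (1 : ℝ) ≤ q := mod_cast Fintype.card_pos
  rw [omegaFactor, coeff_mk, one_mul, norm_pow, norm_inv, norm_pow]
  gcongr
  exact hθ.trans (le_self_pow₀ (hq.trans hθ) (pow_ne_zero _ Fintype.card_ne_zero))

variable [IsUltrametricDist L]

theorem norm_coeff_omegaPartial_le (hθ : (q : ℝ) ≤ ‖θc‖) (N k : ℕ) :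
    ‖coeff k (omegaPartial K L θc ι N)‖ ≤ ‖ι‖ * ((q : ℝ)⁻¹) ^ k := by
  induction N generalizing k with
  | zero =>
    rw [omegaPartial_zero, PowerSeries.coeff_C]
    split_ifs with hk
    · simp [hk]
    · rw [norm_zero]; positivity
  | succ N ih =>
    rw [omegaPartial_succ]
    simpa using norm_coeff_mul_le (by positivity) ih (norm_coeff_omegaFactor_le hθ N) k

theorem norm_coeff_omega_le (hθ : (q : ℝ) ≤ ‖θc‖)
    (hω : Tendsto (omegaPartial K L θc ι) atTop (𝓝 ω)) (k : ℕ) :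
    ‖coeff k ω‖ ≤ ‖ι‖ * ((q : ℝ)⁻¹) ^ k :=
  le_of_tendsto'
    (((continuous_norm.comp (WithPiTopology.continuous_coeff L k)).tendsto ω).comp hω)
    (norm_coeff_omegaPartial_le hθ · k)

theorem norm_coeff_omega_lt (hθ : (q : ℝ) ≤ ‖θc‖) (hι : ι ≠ 0)
    (hω : Tendsto (omegaPartial K L θc ι) atTop (𝓝 ω)) {k : ℕ} (hk : 0 < k) :
    ‖coeff k ω‖ < ‖coeff 0 ω‖ := by
  have hq : (1 : ℝ) < q := mod_cast Fintype.one_lt_card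
  rw [coeff_zero_omega hω]
  calc ‖coeff k ω‖ ≤ ‖ι‖ * ((q : ℝ)⁻¹) ^ k := norm_coeff_omega_le hθ hω k
    _ < ‖ι‖ := mul_lt_of_lt_one_right (norm_pos_iff.2 hι)
      (pow_lt_one₀ (by positivity) (inv_lt_one_of_one_lt₀ hq) hk.ne')

theorem isTate_coe_map_mul_omega [Algebra K L] (hθ : (q : ℝ) ≤ ‖θc‖)
    (hω : Tendsto (omegaPartial K L θc ι) atTop (𝓝 ω)) (p : K[X]) :
    IsTate L ((p.map (algebraMap K L) : L⟦X⟧) * ω) := by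
  have hq : (1 : ℝ) < q := mod_cast Fintype.one_lt_card
  refine isTate_of_norm_coeff_le (by positivity) (inv_lt_one_of_one_lt₀ hq)
    (norm_coeff_mul_le (A := (((q : ℝ)⁻¹) ^ p.natDegree)⁻¹) (by positivity) (fun k => ?_)
      (norm_coeff_omega_le hθ hω))
  rw [Polynomial.coeff_coe]
  exact p.norm_coeff_map_algebraMap_le (by positivity) (inv_le_one_of_one_le₀ hq.le) k

end Omega

/-- **(Anderson–Thakur.)** The Anderson–Thakur function
`ω(t) = ι ∏_{j≥0}(1 - t/θ^{q^j})⁻¹ ∈ 𝕋` (the Gauss-norm limit of its partial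
products) generates freely, over `𝔽_q[t]`, the module of solutions `φ ∈ 𝕋` of the
difference equation `τ(φ) = (t - θ)·φ`: a power series `φ` lies in `𝕋` and
satisfies the equation iff `φ = p(t)·ω(t)` for a unique polynomial `p ∈ 𝔽_q[t]`. -/
theorem solutions_of_omega_difference_equation
    (θc : Cinf) (hθ : ‖θc‖ = (Fintype.card Fq : ℝ))
    (ι : Cinf) (hι : ι ^ (Fintype.card Fq - 1) + θc = 0)
    (ω : PowerSeries Cinf) (hω : GaussTendsto Cinf (omegaPartial Fq Cinf θc ι) ω)
    (φ : PowerSeries Cinf) :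
    (IsTate Cinf φ ∧ tw Fq Cinf φ = (PowerSeries.X - PowerSeries.C θc) * φ) ↔
      ∃! p : Polynomial Fq, φ = ((p.map (algebraMap Fq Cinf) : Polynomial Cinf) : PowerSeries Cinf) * ω := by
  have hθ1 : 1 < ‖θc‖ := hθ ▸ mod_cast Fintype.one_lt_card
  have hι0 : ι ≠ 0 := by
    rintro rfl
    have hθ0 : θc = 0 := by simpa [Nat.sub_ne_zero_of_lt Fintype.one_lt_card] using hι
    norm_num [hθ0] at hθ1
  have hP := hω.tendsto
  have htw := tw_omega hθ1 hι hP
  have hunit : IsUnit ω := by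
    rw [isUnit_iff_constantCoeff, ← coeff_zero_eq_constantCoeff_apply, coeff_zero_omega hP]
    exact hι0.isUnit
  have hXω : (PowerSeries.X - PowerSeries.C θc) * ω ≠ 0 :=
    mul_ne_zero (fun h => by simpa using congrArg (PowerSeries.coeff 1) h) hunit.ne_zero
  constructor
  · rintro ⟨hT, heq⟩
    obtain ⟨f, rfl⟩ := exists_eq_mul_left_of_dvd (hunit.dvd : ω ∣ φ)
    obtain ⟨g, rfl⟩ := exists_map_algebraMap_eq_of_tw_eq_self ((tw_mul_eq_iff htw hXω f).1 heq)
    obtain ⟨p, rfl⟩ :=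
      exists_coe_eq_of_isTate_map_mul (fun _ => norm_coeff_omega_lt hθ.ge hι0 hP) hT
    refine ⟨p, by simp only [Polynomial.polynomial_map_coe], fun p' hp' => ?_⟩
    refine Polynomial.map_injective _ (algebraMap Fq Cinf).injective
      (Polynomial.coe_injective Cinf ?_)
    rw [← mul_left_inj' hunit.ne_zero, ← hp', Polynomial.polynomial_map_coe]
  · rintro ⟨p, rfl, -⟩
    exact ⟨isTate_coe_map_mul_omega hθ.ge hP p,
      (tw_mul_eq_iff htw hXω _).2 (tw_coe_map_algebraMap p)⟩
end
end

section
/- For every positive integer d, the polynomial Ξ^{(d)}(z;t) = Σ_{j=0}^{d-1} b_j(t)·E_j(z) is the unique polynomial in K[t,z] of degree in z strictly less than q^d that agrees with χ_t on A(d); i.e., Ξ^{(d)}(a;t) = χ_t(a) for all a ∈ A of degree < d. -/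
/-!
Write `e_j(x) = ∏_{a ∈ A(j)} (x - a)`, so that `E_j = e_j / D_j` with `D_j = e_j(θ^j)`, and
`[j] = θ^{q^j} - θ`. Since `A(j+1) = A(j) + 𝔽_q θ^j`, the `e_j` are `𝔽_q`-linear and satisfy
`e_{j+1} = e_j^q - D_j^{q-1} e_j`. From this, by induction,
`e_{j+1}(θx) - θ e_{j+1}(x) = [j+1] e_j(x)^q`; at `x = θ^j` this gives `D_{j+1} = [j+1] D_j^q`,
hence `E_j^q = E_j + [j+1] E_{j+1}`. Raising to `q`-th powers then gives Carlitz's formula at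
`t = θ^{q^m}`: `x^{q^m} = ∑_{j ≤ m} b_j(θ^{q^m}) E_j(x)`. So for `deg a < d` the polynomials
`∑_{j<d} b_j(t) E_j(a)` and `χ_t(a)`, of degree `< d` in `t`, agree at the `d` distinct points
`t = θ^{q^m}`, `m < d`. Uniqueness holds because a polynomial of degree `< q^d` in `z` is
determined by its values on the `q^d` elements of `A(d)`.
-/

noncomputable section
open Polynomial

variable (Fq : Type) [Field Fq] [Fintype Fq]

/-- `b_j(t) = ∏_{i=0}^{j-1} (t - θ^{q^i}) ∈ K[t]`. -/
def bK (j : ℕ) : Polynomial (RatFunc Fq) :=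
  ∏ i ∈ Finset.range j,
    (X - C (algebraMap (Polynomial Fq) (RatFunc Fq) ((X : Polynomial Fq) ^ (Fintype.card Fq) ^ i)))

/-- `χ_t(a) ∈ 𝔽_q[t] ⊆ K[t]`: the image of `a ∈ A` under the `𝔽_q`-algebra
morphism `θ ↦ t`. -/
def chiK (a : Polynomial Fq) : Polynomial (RatFunc Fq) :=
  a.map (algebraMap Fq (RatFunc Fq))

/-- The interpolation polynomial `Ξ^{(d)}(z;t) = ∑_{j=0}^{d-1} b_j(t)·E_j(z)`,
viewed in `K[t][z]` (outer variable `z`, inner variable `t`). -/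
def XiPoly (d : ℕ) : Polynomial (Polynomial (RatFunc Fq)) :=
  ∑ j ∈ Finset.range d,
    Polynomial.C (bK Fq j) * (Ecar Fq j).map (Polynomial.C : RatFunc Fq →+* Polynomial (RatFunc Fq))

open Finset

local notation "q" => Fintype.card Fq
local notation "θ" => (RatFunc.X : RatFunc Fq)

section SpanProd

variable {L : Type*} [Field L] [Algebra Fq L]

lemma prod_X_sub_C_eq_X_pow_card_sub_X : ∏ a : Fq, (X - C a) = (X ^ q - X : Fq[X]) := by
  have hmonic : (X ^ q - X : Fq[X]).Monic :=
    monic_X_pow_sub (degree_X_le.trans_lt (by exact_mod_cast Fintype.one_lt_card))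
  have hroots := FiniteField.roots_X_pow_card_sub_X Fq
  rw [← prod_multiset_X_sub_C_of_monic_of_roots_card_eq hmonic, hroots]
  · rfl
  · rw [hroots, FiniteField.X_pow_card_sub_X_natDegree_eq Fq Fintype.one_lt_card]
    rfl

lemma prod_sub_smul (y c : L) :
    ∏ α : Fq, (y - α • c) = y ^ q - c ^ (q - 1) * y := by
  obtain ⟨r, hr⟩ := Nat.exists_eq_add_one_of_ne_zero (Fintype.card_ne_zero (α := Fq))
  rcases eq_or_ne c 0 with rfl | hc
  · have : r ≠ 0 := by have := Fintype.one_lt_card (α := Fq); omega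
    simp [hr, this]
  have hprod : ∏ α : Fq, (y / c - algebraMap Fq L α) = (y / c) ^ (r + 1) - y / c := by
    simpa [hr, eval_prod] using congrArg (aeval (y / c)) (prod_X_sub_C_eq_X_pow_card_sub_X Fq)
  calc ∏ α : Fq, (y - α • c) = ∏ α : Fq, (c * (y / c - algebraMap Fq L α)) := by
        refine prod_congr rfl fun α _ => ?_
        rw [Algebra.smul_def]
        field_simp
    _ = c ^ (r + 1) * ((y / c) ^ (r + 1) - y / c) := by
        rw [prod_mul_distrib, hprod, prod_const, card_univ, hr]
    _ = _ := by
        rw [hr, Nat.add_sub_cancel, mul_sub, ← mul_pow, mul_div_cancel₀ y hc, pow_succ c,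
          mul_assoc, mul_div_cancel₀ y hc]

lemma add_pow_card (x y : L) : (x + y) ^ q = x ^ q + y ^ q :=
  map_add (FiniteField.frobeniusAlgHom Fq L) x y

lemma sub_pow_card (x y : L) : (x - y) ^ q = x ^ q - y ^ q :=
  map_sub (FiniteField.frobeniusAlgHom Fq L) x y

lemma sum_pow_card {ι : Type*} (s : Finset ι) (f : ι → L) :
    (∑ i ∈ s, f i) ^ q = ∑ i ∈ s, f i ^ q :=
  map_sum (FiniteField.frobeniusAlgHom Fq L) f s

lemma aeval_pow_card_pow (y : L) (a : Fq[X]) (m : ℕ) :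
    aeval (y ^ q ^ m) a = aeval y a ^ q ^ m := by
  induction m with
  | zero => simp
  | succ m ih =>
    rw [pow_succ, pow_mul, pow_mul, ← ih]
    exact aeval_algHom_apply (FiniteField.frobeniusAlgHom Fq L) _ a

def spanProd {j : ℕ} (v : Fin j → L) (x : L) : L :=
  ∏ c : Fin j → Fq, (x - ∑ i, c i • v i)

lemma spanProd_zero (v : Fin 0 → L) (x : L) : spanProd Fq v x = x := by
  simp [spanProd]

lemma spanProd_snoc_of_isLinearMap {j : ℕ} (v : Fin j → L) (w : L)
    (hv : IsLinearMap Fq (spanProd Fq v)) (x : L) :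
    spanProd Fq (Fin.snoc v w) x = spanProd Fq v x ^ q
      - spanProd Fq v w ^ (q - 1) * spanProd Fq v x := by
  have hsplit : spanProd Fq (Fin.snoc v w) x = ∏ α : Fq, spanProd Fq v (x - α • w) := by
    rw [spanProd, ← (Fin.snocEquiv fun _ => Fq).prod_comp, Fintype.prod_prod_type]
    refine prod_congr rfl fun α _ => prod_congr rfl fun c _ => ?_
    simp only [Fin.snocEquiv, Equiv.coe_fn_mk, Fin.sum_univ_castSucc, Fin.snoc_castSucc,
      Fin.snoc_last]
    ring
  rw [hsplit, ← prod_sub_smul]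
  refine prod_congr rfl fun α _ => ?_
  rw [hv.map_sub, hv.map_smul]

lemma isLinearMap_spanProd {j : ℕ} (v : Fin j → L) : IsLinearMap Fq (spanProd Fq v) := by
  induction j with
  | zero =>
    rw [funext (spanProd_zero Fq v)]
    exact LinearMap.id.isLinear
  | succ j ih =>
    rw [← Fin.snoc_init_self v]
    have hrec := spanProd_snoc_of_isLinearMap Fq (Fin.init v) (v (Fin.last j)) (ih _)
    refine ⟨fun x y => ?_, fun α x => ?_⟩
    · rw [hrec (x + y), hrec x, hrec y, (ih _).map_add, add_pow_card]
      ring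
    · rw [hrec (α • x), hrec x, (ih _).map_smul, _root_.smul_pow, FiniteField.pow_card,
        mul_smul_comm, smul_sub]

lemma spanProd_snoc {j : ℕ} (v : Fin j → L) (w x : L) :
    spanProd Fq (Fin.snoc v w) x = spanProd Fq v x ^ q
      - spanProd Fq v w ^ (q - 1) * spanProd Fq v x :=
  spanProd_snoc_of_isLinearMap Fq v w (isLinearMap_spanProd Fq v) x

end SpanProd

section Carlitz

-- The `e_j` of the header: `A(j)` is the `𝔽_q`-span of `1, θ, …, θ^{j-1}`.
def carlitzProd (j : ℕ) : RatFunc Fq → RatFunc Fq :=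
  spanProd Fq fun i : Fin j => θ ^ (i : ℕ)

omit [Fintype Fq] in
lemma algebraMap_polyOf {j : ℕ} (c : Fin j → Fq) :
    algebraMap Fq[X] (RatFunc Fq) (polyOf Fq c) = ∑ i, c i • θ ^ (i : ℕ) := by
  simp [polyOf, Algebra.smul_def, RatFunc.algebraMap_X]

omit [Fintype Fq] in
lemma degree_polyOf_lt {d : ℕ} (c : Fin d → Fq) : (polyOf Fq c).degree < d :=
  degree_sum_fin_lt c

lemma algebraMap_Dmonic (j : ℕ) :
    algebraMap Fq[X] (RatFunc Fq) (Dmonic Fq j) = carlitzProd Fq j (θ ^ j) := by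
  rw [Dmonic, map_prod, carlitzProd, spanProd]
  refine Fintype.prod_equiv (Equiv.neg _) _ _ fun c => ?_
  simp [algebraMap_polyOf, RatFunc.algebraMap_X, sub_eq_add_neg]

lemma carlitzProd_theta_pow_ne_zero (j : ℕ) : carlitzProd Fq j (θ ^ j) ≠ 0 := by
  rw [← algebraMap_Dmonic, ne_eq, map_eq_zero_iff _ (IsFractionRing.injective Fq[X] (RatFunc Fq))]
  exact (monic_prod_of_monic _ _ fun c _ => monic_X_pow_add (degree_polyOf_lt Fq c)).ne_zero

lemma eval_Ecar (j : ℕ) (x : RatFunc Fq) :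
    (Ecar Fq j).eval x = carlitzProd Fq j x / carlitzProd Fq j (θ ^ j) := by
  simp only [Ecar, eval_mul, eval_C, eval_prod, eval_sub, eval_X, algebraMap_polyOf,
    algebraMap_Dmonic, div_eq_inv_mul]
  rfl

lemma carlitzProd_zero (x : RatFunc Fq) : carlitzProd Fq 0 x = x :=
  spanProd_zero Fq _ x

lemma carlitzProd_succ (j : ℕ) (x : RatFunc Fq) :
    carlitzProd Fq (j + 1) x = carlitzProd Fq j x ^ q
      - carlitzProd Fq j (θ ^ j) ^ (q - 1) * carlitzProd Fq j x := by
  have hsnoc : (Fin.snoc (fun i : Fin j => θ ^ (i : ℕ)) (θ ^ j) : Fin (j + 1) → RatFunc Fq)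
      = fun i : Fin (j + 1) => θ ^ (i : ℕ) := by
    funext i
    induction i using Fin.lastCases <;> simp
  rw [carlitzProd, ← hsnoc, spanProd_snoc]
  rfl

lemma carlitzProd_succ_theta_pow (j : ℕ) : carlitzProd Fq (j + 1) (θ ^ j) = 0 := by
  rw [carlitzProd_succ, pow_sub_one_mul Fintype.card_ne_zero, sub_self]

lemma carlitzProd_succ_theta_pow_succ_of_theta_mul {j : ℕ}
    (h : ∀ x, carlitzProd Fq (j + 1) (θ * x) - θ * carlitzProd Fq (j + 1) x
      = (θ ^ q ^ (j + 1) - θ) * carlitzProd Fq j x ^ q) :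
    carlitzProd Fq (j + 1) (θ ^ (j + 1))
      = (θ ^ q ^ (j + 1) - θ) * carlitzProd Fq j (θ ^ j) ^ q := by
  simpa [← pow_succ', carlitzProd_succ_theta_pow] using h (θ ^ j)

lemma carlitzProd_theta_mul_sub (j : ℕ) (x : RatFunc Fq) :
    carlitzProd Fq (j + 1) (θ * x) - θ * carlitzProd Fq (j + 1) x
      = (θ ^ q ^ (j + 1) - θ) * carlitzProd Fq j x ^ q := by
  induction j generalizing x with
  | zero =>
    simp only [carlitzProd_succ, carlitzProd_zero, pow_zero, one_pow, one_mul, zero_add, pow_one,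
      mul_pow]
    ring
  | succ j ih =>
    set B := θ ^ q ^ (j + 1) - θ
    set D := carlitzProd Fq j (θ ^ j)
    set u := carlitzProd Fq j x
    set E := carlitzProd Fq (j + 1) x
    have hθx : carlitzProd Fq (j + 1) (θ * x) = θ * E + B * u ^ q := by
      rw [← ih x]
      ring
    have hEq : E ^ q = (u ^ q) ^ q - (D ^ q) ^ (q - 1) * u ^ q := by
      rw [show E = u ^ q - D ^ (q - 1) * u from carlitzProd_succ Fq j x, sub_pow_card, mul_pow]
      ring
    have hBq : B ^ q = θ ^ q ^ (j + 1 + 1) - θ ^ q := by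
      rw [sub_pow_card, ← pow_mul, ← pow_succ]
    -- `D_{j+1} = [j+1] D_j^q`: the induction hypothesis at `x = θ^j`
    have hDB : carlitzProd Fq (j + 1) (θ ^ (j + 1)) ^ (q - 1) * B = B ^ q * (D ^ q) ^ (q - 1) := by
      rw [carlitzProd_succ_theta_pow_succ_of_theta_mul Fq ih, mul_pow, mul_right_comm,
        pow_sub_one_mul Fintype.card_ne_zero]
    rw [carlitzProd_succ Fq (j + 1), carlitzProd_succ Fq (j + 1), hθx, add_pow_card, mul_pow,
      mul_pow]
    linear_combination -u ^ q * hDB + E ^ q * hBq - B ^ q * hEq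

lemma carlitzProd_succ_theta_pow_succ (j : ℕ) :
    carlitzProd Fq (j + 1) (θ ^ (j + 1))
      = (θ ^ q ^ (j + 1) - θ) * carlitzProd Fq j (θ ^ j) ^ q :=
  carlitzProd_succ_theta_pow_succ_of_theta_mul Fq (carlitzProd_theta_mul_sub Fq j)

lemma eval_Ecar_pow_card (j : ℕ) (x : RatFunc Fq) :
    (Ecar Fq j).eval x ^ q
      = (Ecar Fq j).eval x + (θ ^ q ^ (j + 1) - θ) * (Ecar Fq (j + 1)).eval x := by
  have hD := carlitzProd_theta_pow_ne_zero Fq j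
  have hBD := carlitzProd_theta_pow_ne_zero Fq (j + 1)
  rw [carlitzProd_succ_theta_pow_succ, mul_ne_zero_iff] at hBD
  rw [eval_Ecar, eval_Ecar, carlitzProd_succ_theta_pow_succ, carlitzProd_succ, div_pow,
    mul_div_assoc', mul_div_mul_left _ _ hBD.1, sub_div,
    ← pow_sub_one_mul Fintype.card_ne_zero (carlitzProd Fq j (θ ^ j)),
    mul_div_mul_left _ _ (pow_ne_zero _ hD)]
  ring

lemma eval_bK (j : ℕ) (y : RatFunc Fq) :
    (bK Fq j).eval y = ∏ l ∈ range j, (y - θ ^ q ^ l) := by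
  simp [bK, eval_prod, RatFunc.algebraMap_X]

lemma eval_bK_theta_pow_eq_zero {m j : ℕ} (h : m < j) : (bK Fq j).eval (θ ^ q ^ m) = 0 := by
  rw [eval_bK]
  exact prod_eq_zero (mem_range.2 h) (sub_self _)

lemma eval_bK_pow_card (j : ℕ) (y : RatFunc Fq) :
    (bK Fq j).eval y ^ q = ∏ l ∈ range j, (y ^ q - θ ^ q ^ (l + 1)) := by
  rw [eval_bK, ← prod_pow]
  refine prod_congr rfl fun l _ => ?_
  rw [sub_pow_card, ← pow_mul, ← pow_succ]

lemma eval_bK_succ_pow_card (k : ℕ) (y : RatFunc Fq) :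
    (bK Fq (k + 1)).eval (y ^ q)
      = (bK Fq (k + 1)).eval y ^ q + (θ ^ q ^ (k + 1) - θ) * (bK Fq k).eval y ^ q := by
  rw [eval_bK_pow_card, eval_bK_pow_card, eval_bK, prod_range_succ', prod_range_succ]
  simp only [pow_zero, pow_one]
  ring

lemma sum_eval_bK_mul_eval_Ecar (m : ℕ) (x : RatFunc Fq) :
    ∑ j ∈ range (m + 1), (bK Fq j).eval (θ ^ q ^ m) * (Ecar Fq j).eval x = x ^ q ^ m := by
  induction m with
  | zero => simp [eval_bK, eval_Ecar, carlitzProd_zero]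
  | succ m ih =>
    set β := fun j => (bK Fq j).eval (θ ^ q ^ m)
    set E := fun j => (Ecar Fq j).eval x
    have hβ0 : ∀ y : RatFunc Fq, (bK Fq 0).eval y = 1 := by simp [eval_bK]
    have hshift : ∑ j ∈ range (m + 1), β j ^ q * E j
        = E 0 + ∑ j ∈ range (m + 1), β (j + 1) ^ q * E (j + 1) := by
      have hβ : β (m + 1) = 0 := eval_bK_theta_pow_eq_zero Fq (Nat.lt_succ_self m)
      rw [sum_range_succ' (fun j => β j ^ q * E j),
        sum_range_succ (fun j => β (j + 1) ^ q * E (j + 1)), hβ, zero_pow Fintype.card_ne_zero, zero_mul, add_zero, show β 0 = 1 from hβ0 _, one_pow,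
        one_mul, add_comm]
    calc ∑ j ∈ range (m + 1 + 1), (bK Fq j).eval (θ ^ q ^ (m + 1)) * E j
        = E 0 + ∑ j ∈ range (m + 1),
            (β (j + 1) ^ q + (θ ^ q ^ (j + 1) - θ) * β j ^ q) * E (j + 1) := by
          rw [sum_range_succ', pow_succ, pow_mul, hβ0, one_mul, add_comm]
          simp only [eval_bK_succ_pow_card, β]
      _ = ∑ j ∈ range (m + 1), β j ^ q * (E j + (θ ^ q ^ (j + 1) - θ) * E (j + 1)) := by
          simp only [mul_add, add_mul, sum_add_distrib, hshift]
          ring_nf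
      _ = x ^ q ^ (m + 1) := by
          simp only [E, ← eval_Ecar_pow_card, ← mul_pow, ← sum_pow_card, β, ih, ← pow_mul,
            ← pow_succ]

omit [Fintype Fq] in
lemma polyOf_injective (d : ℕ) : Function.Injective (polyOf Fq (d := d)) := fun c c' h =>
  funext fun i => by
    simpa [polyOf, finsetSum_coeff, coeff_C_mul_X_pow, Fin.val_inj] using congrArg (coeff · i) h

omit [Fintype Fq] in
lemma theta_pow_injective : Function.Injective fun n : ℕ => θ ^ n := fun a b h => by
  have hX : (X ^ a : Fq[X]) = X ^ b :=
    IsFractionRing.injective Fq[X] (RatFunc Fq) (by simpa [RatFunc.algebraMap_X] using h)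
  simpa using congrArg natDegree hX

lemma degree_bK (j : ℕ) : (bK Fq j).degree = j := by
  simp only [bK, degree_prod, degree_X_sub_C]
  simp

lemma degree_Ecar (j : ℕ) : (Ecar Fq j).degree = (q ^ j : ℕ) := by
  have hD : algebraMap Fq[X] (RatFunc Fq) (Dmonic Fq j) ≠ 0 := by
    rw [algebraMap_Dmonic]
    exact carlitzProd_theta_pow_ne_zero Fq j
  rw [Ecar, degree_C_mul (inv_ne_zero hD), degree_prod]
  simp

lemma sum_bK_mul_C_eval_Ecar {d : ℕ} {a : Fq[X]} (ha : a.degree < d) :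
    ∑ j ∈ range d, bK Fq j * C ((Ecar Fq j).eval (algebraMap Fq[X] (RatFunc Fq) a))
      = chiK Fq a := by
  refine eq_of_degrees_lt_of_eval_index_eq (v := fun m => θ ^ q ^ m) (range d)
    ((theta_pow_injective Fq).comp (Nat.pow_right_injective Fintype.one_lt_card)).injOn
    ?_ ?_ fun m hm => ?_
  · refine (degree_sum_le _ _).trans_lt
      ((Finset.sup_lt_iff (WithBot.bot_lt_coe _)).2 fun j hj => ?_)
    calc (bK Fq j * C _).degree ≤ (bK Fq j).degree := by
          rw [mul_comm, ← smul_eq_C_mul]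
          exact degree_smul_le _ _
      _ < #(range d) := by
          rw [degree_bK, card_range]
          exact_mod_cast mem_range.1 hj
  · rwa [card_range, chiK, degree_map]
  · have hsub : range (m + 1) ⊆ range d := range_subset_range.2 (mem_range.1 hm)
    rw [eval_finsetSum, ← sum_subset hsub fun j _ hj => ?_]
    · simp only [eval_mul, eval_C]
      rw [sum_eval_bK_mul_eval_Ecar, chiK, eval_map_algebraMap, aeval_pow_card_pow,
        RatFunc.aeval_X_left_eq_algebraMap]
    · rw [eval_mul, eval_bK_theta_pow_eq_zero Fq (by simpa using hj), zero_mul]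

lemma eval_XiPoly (d : ℕ) (y : RatFunc Fq) :
    (XiPoly Fq d).eval (C y) = ∑ j ∈ range d, bK Fq j * C ((Ecar Fq j).eval y) := by
  simp [XiPoly, eval_finsetSum, eval_map, eval₂_at_apply]

lemma degree_XiPoly_lt (d : ℕ) : (XiPoly Fq d).degree < (q ^ d : ℕ) := by
  refine (degree_sum_le _ _).trans_lt ((Finset.sup_lt_iff (WithBot.bot_lt_coe _)).2 fun j hj => ?_)
  calc (C (bK Fq j) * (Ecar Fq j).map C).degree ≤ ((Ecar Fq j).map C).degree := by
        rw [← smul_eq_C_mul]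
        exact degree_smul_le _ _
    _ = (q ^ j : ℕ) := by rw [degree_map, degree_Ecar]
    _ < (q ^ d : ℕ) := by exact_mod_cast Nat.pow_lt_pow_right Fintype.one_lt_card (mem_range.1 hj)

end Carlitz

theorem XiPoly_interpolates (d : ℕ) :
    ((XiPoly Fq d).degree < ((Fintype.card Fq ^ d : ℕ) : WithBot ℕ) ∧
      ∀ a : Polynomial Fq, a.degree < (d : WithBot ℕ) →
        (XiPoly Fq d).eval (Polynomial.C (algebraMap (Polynomial Fq) (RatFunc Fq) a)) = chiK Fq a) ∧
    ∀ Ψ : Polynomial (Polynomial (RatFunc Fq)),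
      Ψ.degree < ((Fintype.card Fq ^ d : ℕ) : WithBot ℕ) →
      (∀ a : Polynomial Fq, a.degree < (d : WithBot ℕ) →
        Ψ.eval (Polynomial.C (algebraMap (Polynomial Fq) (RatFunc Fq) a)) = chiK Fq a) →
      Ψ = XiPoly Fq d := by
  have hdeg := degree_XiPoly_lt Fq d
  have heval : ∀ a : Fq[X], a.degree < d →
      (XiPoly Fq d).eval (C (algebraMap Fq[X] (RatFunc Fq) a)) = chiK Fq a := fun a ha =>
    (eval_XiPoly Fq d _).trans (sum_bK_mul_C_eval_Ecar Fq ha)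
  refine ⟨⟨hdeg, heval⟩, fun Ψ hΨ hΨA => ?_⟩
  have hcard : #(univ : Finset (Fin d → Fq)) = q ^ d := by simp
  refine eq_of_degrees_lt_of_eval_index_eq
    (v := fun c : Fin d → Fq => C (algebraMap Fq[X] (RatFunc Fq) (polyOf Fq c))) univ
    (C_injective.comp ((IsFractionRing.injective _ _).comp (polyOf_injective Fq d))).injOn
    (hcard ▸ hΨ) (hcard ▸ hdeg) fun c _ => ?_
  rw [hΨA _ (degree_polyOf_lt Fq c), heval _ (degree_polyOf_lt Fq c)]
end
end

section
/- In the completion K_∞ (with |θ| = q), the sequence b_{e+1}(t)/ℓ_e converges in the Tate algebra 𝕋, uniformly on the closed unit disc, to −π̃/ω(t), where π̃ = ι·θ·∏_{j≥1}(1 − θ^{1−q^j})^{-1} and ω(t) = ι ∏_{j≥0}(1 − t θ^{-q^j})^{-1}. -/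
/-!
Writing `t - θ^{q^j} = -θ^{q^j} (1 - t/θ^{q^j})` and `θ - θ^{q^j} = -θ^{q^j} (1 - θ^{1-q^j})`,
the powers of `θ` cancel in `b_{e+1}(t)/ℓ_e` up to the factor `-θ` of index `j = 0`, so
`b_{e+1}(t)/ℓ_e = c_e ∏_{j ≤ e} (1 - t/θ^{q^j})` with `c_e = -θ ∏_{j=1}^{e} (1 - θ^{1-q^j})⁻¹`,
and `c_e → -π̃/ι`. Since `|θ| > 1`, these products have Gauss norm at most `1`, so
`b_{e+1}(t)/ℓ_e` lies within `|c_e + π̃/ι|` of the `(e+1)`-th partial product of `-π̃/ω(t)`.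
-/

noncomputable section
open Polynomial Filter

variable (Fq : Type) [Field Fq] [Fintype Fq]
variable (Cinf : Type) [NontriviallyNormedField Cinf] [CompleteSpace Cinf]
  [IsAlgClosed Cinf] [IsUltrametricDist Cinf] [Algebra Fq Cinf]

/-- `b_e(t) = ∏_{j=0}^{e-1} (t - θ^{q^j})`, as a polynomial over `ℂ_∞`. -/
def bCpoly (θc : Cinf) (e : ℕ) : Polynomial Cinf :=
  ∏ j ∈ Finset.range e, (X - C (θc ^ (Fintype.card Fq) ^ j))

/-- `ℓ_e = ∏_{j=1}^{e} (θ - θ^{q^j}) ∈ ℂ_∞`. -/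
def lC (θc : Cinf) (e : ℕ) : Cinf :=
  ∏ j ∈ Finset.Icc 1 e, (θc - θc ^ (Fintype.card Fq) ^ j)

/-- The `N`-th partial product `(-π̃ ι⁻¹) ∏_{j<N} (1 - t/θ^{q^j})` of
`-π̃/ω(t) = -π̃ ι⁻¹ ∏_{j≥0}(1 - t θ^{-q^j})`. -/
def negPiOverOmegaPartial (θc ι πt : Cinf) (N : ℕ) : PowerSeries Cinf :=
  PowerSeries.C (-πt * ι⁻¹) *
    ∏ j ∈ Finset.range N,
      (1 - PowerSeries.C ((θc ^ (Fintype.card Fq) ^ j)⁻¹) * PowerSeries.X)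

namespace PowerSeries

variable {K : Type*} [NormedField K]

theorem norm_coeff_one_sub_C_mul_X_le_one {b : K} (hb : ‖b‖ ≤ 1) (n : ℕ) :
    ‖coeff n (1 - C b * X)‖ ≤ 1 := by
  rw [map_sub, coeff_one, coeff_C_mul, coeff_X]
  rcases n with _ | _ | n <;> simp [hb]

variable [IsUltrametricDist K]

theorem norm_coeff_mul_le_one {f g : K⟦X⟧} (hf : ∀ n, ‖coeff n f‖ ≤ 1)
    (hg : ∀ n, ‖coeff n g‖ ≤ 1) (n : ℕ) : ‖coeff n (f * g)‖ ≤ 1 := by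
  rw [coeff_mul]
  refine IsUltrametricDist.norm_sum_le_of_forall_le_of_nonneg zero_le_one fun p _ => ?_
  rw [norm_mul]
  exact mul_le_one₀ (hf _) (norm_nonneg _) (hg _)

theorem norm_coeff_prod_one_sub_C_mul_X_le_one {ι : Type*} (s : Finset ι) {b : ι → K}
    (hb : ∀ j ∈ s, ‖b j‖ ≤ 1) (n : ℕ) : ‖coeff n (∏ j ∈ s, (1 - C (b j) * X))‖ ≤ 1 :=
  Finset.prod_induction _ (fun f => ∀ n, ‖coeff n f‖ ≤ 1)
    (fun _ _ => norm_coeff_mul_le_one)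
    (fun n => by rw [coeff_one]; split_ifs <;> simp)
    (fun j hj => norm_coeff_one_sub_C_mul_X_le_one (hb j hj)) n

end PowerSeries

section Factorization

variable {K : Type*} [Field K]

theorem Polynomial.coe_X_sub_C_eq {a : K} (ha : a ≠ 0) :
    ((X - C a : K[X]) : PowerSeries K)
      = PowerSeries.C (-a) * (1 - PowerSeries.C a⁻¹ * PowerSeries.X) := by
  rw [Polynomial.coe_sub, Polynomial.coe_X, Polynomial.coe_C, mul_sub, mul_one, ← mul_assoc,
    ← map_mul, neg_mul, mul_inv_cancel₀ ha]
  simp only [map_neg, map_one]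
  ring

theorem Polynomial.coe_prod_X_sub_C_eq {ι : Type*} (s : Finset ι) {a : ι → K}
    (ha : ∀ j ∈ s, a j ≠ 0) :
    ((∏ j ∈ s, (X - C (a j)) : K[X]) : PowerSeries K)
      = PowerSeries.C (∏ j ∈ s, -a j) *
          ∏ j ∈ s, (1 - PowerSeries.C (a j)⁻¹ * PowerSeries.X) := by
  rw [← Polynomial.coeToPowerSeries.ringHom_apply, map_prod, map_prod,
    ← Finset.prod_mul_distrib]
  exact Finset.prod_congr rfl fun j hj => Polynomial.coe_X_sub_C_eq (ha j hj)

theorem self_sub_pow_eq {θ : K} (hθ : θ ≠ 0) (n : ℕ) :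
    θ - θ ^ n = -θ ^ n * (1 - θ ^ ((1 : ℤ) - n)) := by
  rw [zpow_sub₀ hθ, zpow_one, zpow_natCast]
  field_simp
  ring

end Factorization

theorem lC_inv_mul_prod_neg_pow {F K : Type} [Fintype F] [NontriviallyNormedField K] {θ : K}
    (hθ : θ ≠ 0) (e : ℕ) :
    (lC F K θ e)⁻¹ * ∏ j ∈ Finset.range (e + 1), -θ ^ Fintype.card F ^ j
      = -θ * ∏ j ∈ Finset.Icc 1 e, (1 - θ ^ ((1 : ℤ) - (Fintype.card F : ℤ) ^ j))⁻¹ := by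
  have hlC : lC F K θ e = (∏ j ∈ Finset.Icc 1 e, -θ ^ Fintype.card F ^ j) *
      ∏ j ∈ Finset.Icc 1 e, (1 - θ ^ ((1 : ℤ) - (Fintype.card F : ℤ) ^ j)) := by
    rw [lC, ← Finset.prod_mul_distrib]
    refine Finset.prod_congr rfl fun j _ => ?_
    rw [self_sub_pow_eq hθ, Nat.cast_pow]
  have hne : ∏ j ∈ Finset.Icc 1 e, -θ ^ Fintype.card F ^ j ≠ 0 :=
    Finset.prod_ne_zero_iff.mpr fun j _ => neg_ne_zero.mpr (pow_ne_zero _ hθ)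
  rw [Nat.range_succ_eq_Icc_zero, Finset.Icc_eq_cons_Ioc (Nat.zero_le e), Finset.prod_cons,
    ← Finset.Icc_add_one_left_eq_Ioc, zero_add, hlC,
    Finset.prod_inv_distrib, pow_zero, pow_one]
  field_simp

theorem bCpoly_succ_div_lC_eq {F K : Type} [Fintype F] [NontriviallyNormedField K] {θ : K}
    (hθ : θ ≠ 0) (e : ℕ) :
    PowerSeries.C (lC F K θ e)⁻¹ * (bCpoly F K θ (e + 1) : PowerSeries K)
      = PowerSeries.C (-θ * ∏ j ∈ Finset.Icc 1 e,
            (1 - θ ^ ((1 : ℤ) - (Fintype.card F : ℤ) ^ j))⁻¹) *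
          ∏ j ∈ Finset.range (e + 1),
            (1 - PowerSeries.C ((θ ^ Fintype.card F ^ j)⁻¹) * PowerSeries.X) := by
  rw [bCpoly, Polynomial.coe_prod_X_sub_C_eq _ fun j _ => pow_ne_zero _ hθ, ← mul_assoc,
    ← map_mul, lC_inv_mul_prod_neg_pow hθ]

namespace GaussTendsto

variable {K : Type} [NontriviallyNormedField K] {F G : ℕ → PowerSeries K} {φ χ : PowerSeries K}

theorem add (hF : GaussTendsto K F φ) (hG : GaussTendsto K G χ) :
    GaussTendsto K (fun m => F m + G m) (φ + χ) := by
  intro ε hε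
  obtain ⟨N₁, hN₁⟩ := hF (ε / 2) (half_pos hε)
  obtain ⟨N₂, hN₂⟩ := hG (ε / 2) (half_pos hε)
  refine ⟨max N₁ N₂, fun m hm n => ?_⟩
  calc ‖PowerSeries.coeff n (F m + G m - (φ + χ))‖
      = ‖PowerSeries.coeff n (F m - φ) + PowerSeries.coeff n (G m - χ)‖ := by
        rw [add_sub_add_comm, map_add]
    _ ≤ ‖PowerSeries.coeff n (F m - φ)‖ + ‖PowerSeries.coeff n (G m - χ)‖ := norm_add_le _ _
    _ < ε / 2 + ε / 2 :=
        add_lt_add (hN₁ m (le_of_max_le_left hm) n) (hN₂ m (le_of_max_le_right hm) n)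
    _ = ε := add_halves ε

theorem comp_tendsto (hF : GaussTendsto K F φ) {f : ℕ → ℕ} (hf : Tendsto f atTop atTop) :
    GaussTendsto K (F ∘ f) φ := by
  intro ε hε
  obtain ⟨N, hN⟩ := hF ε hε
  obtain ⟨M, hM⟩ := eventually_atTop.mp (tendsto_atTop.mp hf N)
  exact ⟨M, fun m hm => hN (f m) (hM m hm)⟩

variable {P : ℕ → PowerSeries K} {c : ℕ → K} {c₀ : K}

theorem C_mul_of_tendsto_zero (hc : Tendsto c atTop (nhds 0))
    (hP : ∀ m n, ‖PowerSeries.coeff n (P m)‖ ≤ 1) :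
    GaussTendsto K (fun m => PowerSeries.C (c m) * P m) 0 := by
  intro ε hε
  obtain ⟨N, hN⟩ := Metric.tendsto_atTop.mp hc ε hε
  refine ⟨N, fun m hm n => ?_⟩
  rw [sub_zero, PowerSeries.coeff_C_mul, norm_mul]
  calc ‖c m‖ * ‖PowerSeries.coeff n (P m)‖ ≤ ‖c m‖ :=
        mul_le_of_le_one_right (norm_nonneg _) (hP m n)
    _ < ε := by simpa using hN m hm

theorem C_mul_of_tendsto (h : GaussTendsto K (fun m => PowerSeries.C c₀ * P m) φ)
    (hc : Tendsto c atTop (nhds c₀)) (hP : ∀ m n, ‖PowerSeries.coeff n (P m)‖ ≤ 1) :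
    GaussTendsto K (fun m => PowerSeries.C (c m) * P m) φ := by
  have hsmall := C_mul_of_tendsto_zero (tendsto_sub_nhds_zero_iff.mpr hc) hP
  simpa only [map_sub, sub_mul, sub_add_cancel, zero_add] using hsmall.add h

end GaussTendsto

/-- In the Tate algebra `𝕋` (uniformly on the closed unit disc, i.e. for the
Gauss norm), `b_{e+1}(t)/ℓ_e → -π̃/ω(t)` as `e → ∞`, where
`π̃ = ι θ ∏_{j≥1}(1 - θ^{1-q^j})⁻¹` is the Carlitz period and
`ω(t) = ι ∏_{j≥0}(1 - t θ^{-q^j})⁻¹` the Anderson–Thakur function. -/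
theorem bCpoly_div_l_tendsto (θc : Cinf) (hθ : ‖θc‖ = (Fintype.card Fq : ℝ))
    (ι : Cinf) (hι : ι ^ (Fintype.card Fq - 1) + θc = 0)
    (πt : Cinf)
    (hπ : Tendsto (fun N => ι * θc *
        ∏ j ∈ Finset.Icc 1 N, (1 - θc ^ ((1 : ℤ) - (Fintype.card Fq : ℤ) ^ j))⁻¹)
      atTop (nhds πt))
    (ψ : PowerSeries Cinf)
    (hψ : GaussTendsto Cinf (negPiOverOmegaPartial Fq Cinf θc ι πt) ψ) :
    GaussTendsto Cinf
      (fun e => PowerSeries.C (lC Fq Cinf θc e)⁻¹ *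
        ((bCpoly Fq Cinf θc (e + 1) : Polynomial Cinf) : PowerSeries Cinf)) ψ := by
  have hθ1 : 1 ≤ ‖θc‖ := hθ ▸ mod_cast Fintype.card_pos
  have hθ0 : θc ≠ 0 := norm_pos_iff.mp (zero_lt_one.trans_le hθ1)
  have hι0 : ι ≠ 0 := by
    rintro rfl
    rw [zero_pow (Nat.sub_ne_zero_of_lt Fintype.one_lt_card), zero_add] at hι
    exact hθ0 hι
  have hc : Tendsto (fun e => -θc * ∏ j ∈ Finset.Icc 1 e,
      (1 - θc ^ ((1 : ℤ) - (Fintype.card Fq : ℤ) ^ j))⁻¹) atTop (nhds (-πt * ι⁻¹)) := by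
    refine (hπ.neg.mul_const ι⁻¹).congr fun e => ?_
    field_simp
  have hP : ∀ e n, ‖PowerSeries.coeff n (∏ j ∈ Finset.range (e + 1),
      (1 - PowerSeries.C ((θc ^ Fintype.card Fq ^ j)⁻¹) * PowerSeries.X))‖ ≤ 1 :=
    fun e => PowerSeries.norm_coeff_prod_one_sub_C_mul_X_le_one _ fun j _ => by
      rw [norm_inv, norm_pow]
      exact inv_le_one_of_one_le₀ (one_le_pow₀ hθ1)
  simp_rw [bCpoly_succ_div_lC_eq hθ0]
  exact (hψ.comp_tendsto (tendsto_add_atTop_nat 1)).C_mul_of_tendsto hc hP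
end
end

section
/- Let v ∈ A = 𝔽_q[θ] be a monic irreducible polynomial of degree d and λ ∈ ℂ_∞ a root of v. Then (−1)^d · v = ∏_{i=1}^{d} ω(λ^{q^i})^{q−1}, where ω is the Anderson–Thakur function. -/
/-!
The roots of `v` in `ℂ_∞` are the Frobenius conjugates `tᵢ = λ^{q^i}`, `1 ≤ i ≤ d`: they are
pairwise distinct because `λ^{q^k} = λ` forces `d ∣ k`, so `v(θ) = ∏ (θ - tᵢ)`, and they satisfy
`t_{d+1} = t₁` and `|tᵢ| ≤ 1`. Raising a partial product of `ω(t)` to the `q`-th power replaces `t`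
by `t^q` and shifts the index `j` by one; the missing factor `(1 - t^q/θ)⁻¹` combines with
`ι^q = -θ ι` into `t^q - θ`, which gives `ω(tᵢ)^q = (t_{i+1} - θ) ω(t_{i+1})`. Multiplying over
the cycle `1 ≤ i ≤ d` and cancelling `∏ ω(tᵢ)`, which is nonzero since every partial product has
absolute value `|ι|` by the ultrametric inequality, leaves `∏ ω(tᵢ)^{q-1} = ∏ (tᵢ - θ)`.
-/

open Polynomial Filter Finset Topology

theorem Finset.prod_Icc_one_succ_eq_of_eq {M : Type*} [CommMonoid M] (f : ℕ → M) {d : ℕ}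
    (hf : f (d + 1) = f 1) : ∏ i ∈ Icc 1 d, f (i + 1) = ∏ i ∈ Icc 1 d, f i := by
  have shift (g : ℕ → M) : ∏ i ∈ Icc 1 d, g i = ∏ i ∈ range d, g (i + 1) := by
    rw [range_eq_Ico, prod_Ico_add' g 0 d 1, zero_add, Ico_add_one_right_eq_Icc]
  rw [shift, shift]
  cases d with
  | zero => simp
  | succ n => rw [prod_range_succ, prod_range_succ', hf]

theorem Finset.prod_Icc_pow_sub_one_eq_prod {M : Type*} [CommGroupWithZero M]
    {w c : ℕ → M} {q d : ℕ} (hq : q ≠ 0) (hw : ∀ i ∈ Icc 1 d, w i ≠ 0)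
    (hrec : ∀ i, w i ^ q = c (i + 1) * w (i + 1)) (hc : c (d + 1) = c 1) (hwd : w (d + 1) = w 1) :
    ∏ i ∈ Icc 1 d, w i ^ (q - 1) = ∏ i ∈ Icc 1 d, c i := by
  refine mul_right_cancel₀ (prod_ne_zero_iff.2 hw) ?_
  calc (∏ i ∈ Icc 1 d, w i ^ (q - 1)) * ∏ i ∈ Icc 1 d, w i
      = ∏ i ∈ Icc 1 d, c (i + 1) * w (i + 1) := by
        rw [← prod_mul_distrib]
        exact prod_congr rfl fun i _ => (pow_sub_one_mul hq _).trans (hrec i)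
    _ = ∏ i ∈ Icc 1 d, c i * w i :=
        prod_Icc_one_succ_eq_of_eq (fun i => c i * w i) (by rw [hc, hwd])
    _ = (∏ i ∈ Icc 1 d, c i) * ∏ i ∈ Icc 1 d, w i := prod_mul_distrib

theorem norm_le_one_of_pow_eq_self {K : Type*} [NormedDivisionRing K] {x : K} {n : ℕ}
    (hn : 1 < n) (hx : x ^ n = x) : ‖x‖ ≤ 1 := by
  by_contra! h
  have := pow_lt_pow_right₀ h hn
  rw [pow_one, ← norm_pow, hx] at this
  exact lt_irrefl _ this

theorem norm_one_sub_eq_one {K : Type*} [SeminormedRing K] [NormOneClass K] [IsUltrametricDist K]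
    {y : K} (hy : ‖y‖ < 1) : ‖1 - y‖ = 1 := by
  rw [sub_eq_add_neg, IsUltrametricDist.norm_add_eq_max_of_norm_ne_norm] <;> simp [hy.le, hy.ne']

section Frobenius

variable {Fq K : Type*} [Field Fq] [Fintype Fq] [Field K] [Algebra Fq K] {v : Fq[X]} {lam : K}

theorem pow_card_pow_injective (n : ℕ) :
    Function.Injective fun x : K => x ^ Fintype.card Fq ^ n := by
  have := ((FiniteField.frobeniusAlgHom Fq K) ^ n).toRingHom.injective
  simpa [AlgHom.coe_pow, FiniteField.coe_frobeniusAlgHom, pow_iterate] using this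

theorem aeval_pow_card_pow_eq_zero (hlam : aeval lam v = 0) (n : ℕ) :
    aeval (lam ^ Fintype.card Fq ^ n) v = 0 := by
  have := aeval_algHom_apply (FiniteField.frobeniusAlgHom Fq K ^ n) lam v
  simpa [AlgHom.coe_pow, FiniteField.coe_frobeniusAlgHom, pow_iterate, hlam] using this

theorem pow_card_pow_eq_self_iff (hv : Irreducible v) (hlam : aeval lam v = 0) {k : ℕ} :
    lam ^ Fintype.card Fq ^ k = lam ↔ v.natDegree ∣ k := by
  rw [hv.natDegree_dvd_iff_dvd_X_pow_card_pow_sub_X, ← hv.dvd_iff_aeval_eq_zero hlam,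
    Nat.card_eq_fintype_card]
  simp [sub_eq_zero]

theorem pow_card_pow_natDegree_add (hv : Irreducible v) (hlam : aeval lam v = 0) (i : ℕ) :
    lam ^ Fintype.card Fq ^ (v.natDegree + i) = lam ^ Fintype.card Fq ^ i := by
  rw [pow_add, pow_mul, (pow_card_pow_eq_self_iff hv hlam).2 dvd_rfl]

theorem injOn_pow_card_pow (hv : Irreducible v) (hlam : aeval lam v = 0) :
    Set.InjOn (fun i => lam ^ Fintype.card Fq ^ i) (Icc 1 v.natDegree) := by
  intro i hi j hj hij
  by_contra hne
  wlog hlt : i < j generalizing i j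
  · exact this hj hi hij.symm (Ne.symm hne) (by omega)
  obtain ⟨k, rfl⟩ := Nat.exists_eq_add_of_lt hlt
  have hfix : lam ^ Fintype.card Fq ^ (k + 1) = lam := by
    apply pow_card_pow_injective (Fq := Fq) i
    simp only at hij ⊢
    rw [hij, ← pow_mul, ← pow_add]
    congr 2
    omega
  have := Nat.le_of_dvd k.succ_pos ((pow_card_pow_eq_self_iff hv hlam).1 hfix)
  simp only [coe_Icc, Set.mem_Icc] at hi hj
  omega

theorem map_algebraMap_eq_prod_X_sub_C (hmonic : v.Monic) (hv : Irreducible v)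
    (hlam : aeval lam v = 0) :
    v.map (algebraMap Fq K) = ∏ i ∈ Icc 1 v.natDegree, (X - C (lam ^ Fintype.card Fq ^ i)) := by
  apply eq_of_monic_of_dvd_of_natDegree_le (monic_prod_of_monic _ _ fun i _ => monic_X_sub_C _)
    (hmonic.map _)
  · apply Finset.prod_dvd_of_coprime
    · intro i hi j hj hij
      exact isCoprime_X_sub_C_of_isUnit_sub
        (sub_ne_zero.2 fun h => hij (injOn_pow_card_pow hv hlam hi hj h)).isUnit
    · intro i _
      rw [dvd_iff_isRoot, IsRoot, eval_map_algebraMap, aeval_pow_card_pow_eq_zero hlam]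
  · rw [natDegree_map, natDegree_prod _ _ fun i _ => X_sub_C_ne_zero _]
    simp only [natDegree_X_sub_C, sum_const, Nat.card_Icc, smul_eq_mul, mul_one]
    omega

theorem aeval_eq_prod_sub_pow_card_pow (hmonic : v.Monic) (hv : Irreducible v)
    (hlam : aeval lam v = 0) (x : K) :
    aeval x v = ∏ i ∈ Icc 1 v.natDegree, (x - lam ^ Fintype.card Fq ^ i) := by
  rw [← eval_map_algebraMap, map_algebraMap_eq_prod_X_sub_C hmonic hv hlam, eval_prod]
  simp

end Frobenius

theorem norm_pow_card_pow_le_one {Fq K : Type*} [Field Fq] [Fintype Fq] [NormedField K]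
    [Algebra Fq K] {v : Fq[X]} (hv : Irreducible v) {lam : K} (hlam : aeval lam v = 0) (i : ℕ) :
    ‖lam ^ Fintype.card Fq ^ i‖ ≤ 1 := by
  rw [norm_pow]
  exact pow_le_one₀ (norm_nonneg _) (norm_le_one_of_pow_eq_self
    (Nat.one_lt_pow hv.natDegree_pos.ne' Fintype.one_lt_card)
    ((pow_card_pow_eq_self_iff hv hlam).2 dvd_rfl))

def omegaPartialProd {K : Type*} [Field K] (ι θ : K) (q : ℕ) (t : K) (N : ℕ) : K :=
  ι * ∏ j ∈ range N, (1 - t / θ ^ q ^ j)⁻¹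

section OmegaPartialProd

variable {K : Type*}

theorem norm_omegaPartialProd [NormedField K] [IsUltrametricDist K] {ι θ t : K} {q : ℕ}
    (hθ : 1 < ‖θ‖) (ht : ‖t‖ ≤ 1) (hq : q ≠ 0) (N : ℕ) :
    ‖omegaPartialProd ι θ q t N‖ = ‖ι‖ := by
  have hfactor (j : ℕ) : ‖(1 - t / θ ^ q ^ j)⁻¹‖ = 1 := by
    have hθj : 1 < ‖θ ^ q ^ j‖ := by
      rw [norm_pow]; exact one_lt_pow₀ hθ (pow_ne_zero j hq)
    rw [norm_inv, norm_one_sub_eq_one, inv_one]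
    rw [norm_div, div_lt_one (one_pos.trans hθj)]
    exact ht.trans_lt hθj
  simp only [omegaPartialProd, norm_mul, norm_prod, hfactor, prod_const_one, mul_one]

theorem norm_eq_of_tendsto_omegaPartialProd [NormedField K] [IsUltrametricDist K]
    {ι θ t w : K} {q : ℕ} (hθ : 1 < ‖θ‖) (ht : ‖t‖ ≤ 1) (hq : q ≠ 0)
    (h : Tendsto (omegaPartialProd ι θ q t) atTop (𝓝 w)) : ‖w‖ = ‖ι‖ := by
  refine tendsto_nhds_unique h.norm ?_
  simp only [norm_omegaPartialProd hθ ht hq, tendsto_const_nhds]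

variable {Fq : Type*} [Field Fq] [Fintype Fq]

theorem omegaPartialProd_pow_card [Field K] [Algebra Fq K] {ι θ t : K}
    (hι : ι ^ (Fintype.card Fq - 1) = -θ) (hθ : θ ≠ 0) (htθ : t ^ Fintype.card Fq ≠ θ) (N : ℕ) :
    omegaPartialProd ι θ (Fintype.card Fq) t N ^ Fintype.card Fq =
      (t ^ Fintype.card Fq - θ) *
        omegaPartialProd ι θ (Fintype.card Fq) (t ^ Fintype.card Fq) (N + 1) := by
  set q := Fintype.card Fq
  have hιq : ι ^ q = -θ * ι := by rw [← hι, pow_sub_one_mul Fintype.card_ne_zero]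
  have hfactor (j : ℕ) : ((1 - t / θ ^ q ^ j)⁻¹) ^ q = (1 - t ^ q / θ ^ q ^ (j + 1))⁻¹ := by
    have := map_inv₀ (FiniteField.frobeniusAlgHom Fq K) (1 - t / θ ^ q ^ j)
    simp only [FiniteField.coe_frobeniusAlgHom, map_sub, map_one, map_div₀] at this
    rw [this, ← pow_mul, ← pow_succ]
  simp only [omegaPartialProd, mul_pow, ← prod_pow, hfactor, prod_range_succ', hιq, pow_zero,
    pow_one]
  field_simp
  ring

theorem pow_card_eq_of_tendsto_omegaPartialProd [Field K] [TopologicalSpace K] [IsTopologicalRing K]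
    [T2Space K] [Algebra Fq K] {ι θ t w w' : K}
    (hι : ι ^ (Fintype.card Fq - 1) = -θ) (hθ : θ ≠ 0) (htθ : t ^ Fintype.card Fq ≠ θ)
    (h : Tendsto (omegaPartialProd ι θ (Fintype.card Fq) t) atTop (𝓝 w))
    (h' : Tendsto (omegaPartialProd ι θ (Fintype.card Fq) (t ^ Fintype.card Fq)) atTop (𝓝 w')) :
    w ^ Fintype.card Fq = (t ^ Fintype.card Fq - θ) * w' := by
  refine tendsto_nhds_unique (h.pow _) ?_
  simp only [omegaPartialProd_pow_card hι hθ htθ]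
  exact (h'.comp (tendsto_add_atTop_nat 1)).const_mul _

end OmegaPartialProd

noncomputable section
open Polynomial Filter

variable (Fq : Type) [Field Fq] [Fintype Fq]
variable (Cinf : Type) [NontriviallyNormedField Cinf] [CompleteSpace Cinf]
  [IsAlgClosed Cinf] [IsUltrametricDist Cinf] [Algebra Fq Cinf]

/-- **Evaluation of the Anderson–Thakur function at the roots of a monic
irreducible.** Let `v ∈ A = 𝔽_q[θ]` be monic irreducible of degree `d` and
`λ ∈ ℂ_∞` a root of `v`.  Then `(-1)^d · v = ∏_{i=1}^{d} ω(λ^{q^i})^{q-1}`,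
where `ω(x) = ι ∏_{j≥0} (1 - x/θ^{q^j})⁻¹` (the infinite product converging
for `|x| ≤ 1`, in particular at the roots of unity `λ^{q^i}`). -/
theorem omega_at_roots_of_irreducible
    (θc : Cinf) (hθ : ‖θc‖ = (Fintype.card Fq : ℝ))
    (ι : Cinf) (hι : ι ^ (Fintype.card Fq - 1) + θc = 0)
    (ωv : Cinf → Cinf)
    (hω : ∀ x : Cinf, ‖x‖ ≤ 1 →
      Tendsto (fun N => ι * ∏ j ∈ Finset.range N, (1 - x / θc ^ (Fintype.card Fq) ^ j)⁻¹)
        atTop (nhds (ωv x)))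
    (v : Polynomial Fq) (hmonic : v.Monic) (hirr : Irreducible v)
    (d : ℕ) (hd : v.natDegree = d)
    (lam : Cinf) (hlam : Polynomial.aeval lam v = 0) :
    (-1 : Cinf) ^ d * Polynomial.aeval θc v =
      ∏ i ∈ Finset.Icc 1 d, (ωv (lam ^ (Fintype.card Fq) ^ i)) ^ (Fintype.card Fq - 1) := by
  set q := Fintype.card Fq
  subst hd
  have hθ1 : 1 < ‖θc‖ := hθ ▸ mod_cast Fintype.one_lt_card
  have hθ0 : θc ≠ 0 := norm_pos_iff.1 (one_pos.trans hθ1)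
  have hι' : ι ^ (q - 1) = -θc := eq_neg_of_add_eq_zero_left hι
  have hι0 : ι ≠ 0 := by
    rintro rfl
    rw [zero_pow (Nat.sub_ne_zero_of_lt Fintype.one_lt_card)] at hι'
    exact hθ0 (neg_eq_zero.1 hι'.symm)
  set t : ℕ → Cinf := fun i => lam ^ q ^ i
  have hsucc (i : ℕ) : t i ^ q = t (i + 1) := by simp only [t, ← pow_mul, ← pow_succ]
  have hperiod : t (v.natDegree + 1) = t 1 := pow_card_pow_natDegree_add hirr hlam 1
  have hnorm (i : ℕ) : ‖t i‖ ≤ 1 := norm_pow_card_pow_le_one hirr hlam i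
  have hωne (i : ℕ) : ωv (t i) ≠ 0 := by
    rw [← norm_ne_zero_iff, norm_eq_of_tendsto_omegaPartialProd hθ1 (hnorm i)
      Fintype.card_ne_zero (hω _ (hnorm i)), norm_ne_zero_iff]
    exact hι0
  have hrec (i : ℕ) : ωv (t i) ^ q = (t (i + 1) - θc) * ωv (t (i + 1)) := by
    rw [← hsucc]
    refine pow_card_eq_of_tendsto_omegaPartialProd hι' hθ0 ?_ (hω _ (hnorm i)) ?_
    · exact fun h => (hθ1.trans_le (h ▸ hsucc i ▸ hnorm (i + 1))).false
    · exact hsucc i ▸ hω _ (hnorm (i + 1))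
  rw [aeval_eq_prod_sub_pow_card_pow hmonic hirr hlam,
    prod_Icc_pow_sub_one_eq_prod (c := fun i => t i - θc) Fintype.card_ne_zero
      (fun i _ => hωne i) hrec (by rw [hperiod]) (by rw [hperiod])]
  simpa using (prod_neg (s := Icc 1 v.natDegree) fun i => θc - t i).symm
end
end

section
/- Let q ≥ 3 and let n be a positive integer divisible by q−1 with base-q digit sum l(n) ≥ 3(q−1). If μ ∈ ℕ^{2(q−1)} satisfies Σ_i q^{μ_i} ≤ n and is maximal for this quantity among all such tuples, then every entry of μ is nonzero. -/
lemma digitsum_rec (q : ℕ) (hq : 2 ≤ q) (m : ℕ) :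
    (Nat.digits q m).sum = m % q + (Nat.digits q (m / q)).sum := by
  rcases Nat.eq_zero_or_pos m with h | h
  · simp [h]
  · rw [Nat.digits_def' (by omega : 1 < q) h, List.sum_cons]

lemma digitsum_succ (q : ℕ) (hq : 2 ≤ q) :
    ∀ m : ℕ, (Nat.digits q (m + 1)).sum ≤ (Nat.digits q m).sum + 1 := by
  intro m
  induction m using Nat.strong_induction_on with
  | _ m ih =>
    by_cases hd : q ∣ m + 1
    · obtain ⟨t, ht⟩ := hd
      have ht1 : 1 ≤ t := by nlinarith
      obtain ⟨t', rfl⟩ : ∃ t', t = t' + 1 := ⟨t - 1, by omega⟩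
      have hqt : q * (t' + 1) = q * t' + q := by ring
      have hm : m = (q - 1) + q * t' := by omega
      have hmod : m % q = q - 1 := by
        rw [hm, Nat.add_mul_mod_self_left, Nat.mod_eq_of_lt (by omega)]
      have hdiv : m / q = t' := by
        rw [hm, Nat.add_mul_div_left _ _ (by omega : 0 < q),
          Nat.div_eq_of_lt (by omega), Nat.zero_add]
      have hlt : t' < m := by nlinarith
      have h1 : (Nat.digits q (m + 1)).sum = (Nat.digits q (t' + 1)).sum := by
        rw [digitsum_rec q hq (m + 1)]
        have hz : (m + 1) % q = 0 := by rw [ht, Nat.mul_mod_right]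
        have h2 : (m + 1) / q = t' + 1 := by
          rw [ht, Nat.mul_div_cancel_left _ (by omega : 0 < q)]
        rw [hz, h2, Nat.zero_add]
      calc (Nat.digits q (m + 1)).sum = (Nat.digits q (t' + 1)).sum := h1
        _ ≤ (Nat.digits q t').sum + 1 := ih _ hlt
        _ ≤ (Nat.digits q m).sum + 1 := by
            rw [digitsum_rec q hq m, hmod, hdiv]; omega
    · have hmod : m % q < q - 1 := by
        have h1 := Nat.mod_lt m (show 0 < q by omega)
        rcases Nat.lt_or_ge (m % q) (q - 1) with h | h
        · exact h
        · exfalso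
          apply hd
          have h2 := Nat.mod_add_div m q
          have h3 : q * (m / q + 1) = q * (m / q) + q := by ring
          exact ⟨m / q + 1, by omega⟩
      have hm : m + 1 = (m % q + 1) + q * (m / q) := by
        have := Nat.mod_add_div m q; omega
      have hmod1 : (m + 1) % q = m % q + 1 := by
        rw [hm, Nat.add_mul_mod_self_left, Nat.mod_eq_of_lt (by omega)]
      have hdiv1 : (m + 1) / q = m / q := by
        rw [hm, Nat.add_mul_div_left _ _ (by omega : 0 < q),
          Nat.div_eq_of_lt (by omega), Nat.zero_add]
      rw [digitsum_rec q hq (m + 1), hmod1, hdiv1, digitsum_rec q hq m]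
      omega

lemma digitsum_add_pow (q : ℕ) (hq : 2 ≤ q) :
    ∀ (k m : ℕ), (Nat.digits q (m + q ^ k)).sum ≤ (Nat.digits q m).sum + 1 := by
  intro k
  induction k with
  | zero => intro m; simpa using digitsum_succ q hq m
  | succ k ih =>
    intro m
    have hm : m + q ^ (k + 1) = m % q + q * (m / q + q ^ k) := by
      have h1 := Nat.mod_add_div m q
      have h2 : q * (m / q + q ^ k) = q * (m / q) + q ^ (k + 1) := by ring
      omega
    have hmq : m % q < q := Nat.mod_lt m (by omega)
    have hmod : (m + q ^ (k + 1)) % q = m % q := by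
      rw [hm, Nat.add_mul_mod_self_left, Nat.mod_eq_of_lt hmq]
    have hdiv : (m + q ^ (k + 1)) / q = m / q + q ^ k := by
      rw [hm, Nat.add_mul_div_left _ _ (by omega : 0 < q),
        Nat.div_eq_of_lt hmq, Nat.zero_add]
    rw [digitsum_rec q hq (m + q ^ (k + 1)), hmod, hdiv, digitsum_rec q hq m]
    have := ih (m / q)
    omega

lemma digitsum_sum_pow {ι : Type*} [DecidableEq ι] (q : ℕ) (hq : 2 ≤ q)
    (β : ι → ℕ) (s : Finset ι) :
    (Nat.digits q (∑ i ∈ s, q ^ β i)).sum ≤ s.card := by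
  induction s using Finset.induction_on with
  | empty => simp
  | @insert a s hnotmem ih =>
    rw [Finset.sum_insert hnotmem, Finset.card_insert_of_notMem hnotmem, add_comm]
    calc (Nat.digits q (∑ i ∈ s, q ^ β i + q ^ β a)).sum
        ≤ (Nat.digits q (∑ i ∈ s, q ^ β i)).sum + 1 := digitsum_add_pow q hq _ _
      _ ≤ s.card + 1 := by omega

/-- **Maximal tuples have no zero entries.** Let `q ≥ 3` and let `n` be a
positive integer divisible by `q - 1` whose base-`q` digit sum satisfies
`l(n) ≥ 3(q-1)`.  If `μ ∈ ℕ^{2(q-1)}` satisfies `|μ|₁ := ∑_i q^{μ_i} ≤ n` and is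
maximal for `|·|₁` among all such tuples, then every entry of `μ` is nonzero. -/
theorem maximal_tuple_entries_ne_zero (q : ℕ) (hq : 3 ≤ q)
    (n : ℕ) (hn : 0 < n) (hdvd : (q - 1) ∣ n)
    (hlen : 3 * (q - 1) ≤ (Nat.digits q n).sum)
    (μ : Fin (2 * (q - 1)) → ℕ)
    (hμ : ∑ i, q ^ μ i ≤ n)
    (hmax : ∀ β : Fin (2 * (q - 1)) → ℕ, (∑ i, q ^ β i ≤ n) →
      ∑ i, q ^ β i ≤ ∑ i, q ^ μ i) :
    ∀ i, μ i ≠ 0 := by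
  intro i hi0
  set M := ∑ i, q ^ μ i with hM
  have hmodM : (q - 1) ∣ M := by
    have hone : ∀ k : ℕ, q ^ k ≡ 1 [MOD q - 1] := by
      intro k
      have hq1 : q ≡ 1 [MOD q - 1] := by
        have heq : q = 1 + (q - 1) := by omega
        calc q = 1 + (q - 1) := heq
          _ ≡ 1 + 0 [MOD q - 1] := Nat.ModEq.add_left 1 (Nat.modEq_zero_iff_dvd.mpr dvd_rfl)
          _ = 1 := by omega
      simpa using hq1.pow k
    have hone' : ∀ k : ℕ, q ^ k % (q - 1) = 1 := by
      intro k
      have := hone k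
      unfold Nat.ModEq at this
      rwa [Nat.mod_eq_of_lt (by omega : 1 < q - 1)] at this
    have hMmod : M % (q - 1) = (∑ _i : Fin (2 * (q - 1)), 1) % (q - 1) := by
      rw [hM, Finset.sum_nat_mod]
      congr 1
      exact Finset.sum_congr rfl fun j _ => hone' (μ j)
    have hcard : (∑ _i : Fin (2 * (q - 1)), 1 : ℕ) = 2 * (q - 1) := by simp
    rw [hcard] at hMmod
    refine Nat.dvd_of_mod_eq_zero ?_
    rw [hMmod]; exact Nat.mul_mod_left 2 (q - 1)
  by_cases hle : M + (q - 1) ≤ n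
  · set β := Function.update μ i 1 with hβ
    have hsum : ∑ j, q ^ β j = M + (q - 1) := by
      rw [hβ, hM]
      rw [← Finset.sum_erase_add _ _ (Finset.mem_univ i),
          ← Finset.sum_erase_add _ (fun j => q ^ μ j) (Finset.mem_univ i)]
      have h1 : ∑ j ∈ Finset.univ.erase i, q ^ Function.update μ i 1 j
          = ∑ j ∈ Finset.univ.erase i, q ^ μ j := by
        apply Finset.sum_congr rfl
        intro j hj
        rw [Function.update_of_ne (Finset.ne_of_mem_erase hj)]
      rw [h1, Function.update_self, hi0]
      have e1 : q ^ 1 = q := pow_one q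
      have e0 : q ^ 0 = 1 := pow_zero q
      omega
    have hc := hmax β (by omega)
    rw [hsum] at hc
    omega
  · have hMn : M = n := by
      have h1 : (q - 1) ∣ (n - M) := Nat.dvd_sub hdvd hmodM
      have h3 : n - M = 0 := Nat.eq_zero_of_dvd_of_lt h1 (by omega)
      omega
    have hbound : (Nat.digits q n).sum ≤ 2 * (q - 1) := by
      rw [← hMn, hM]
      calc (Nat.digits q (∑ i, q ^ μ i)).sum
          ≤ (Finset.univ : Finset (Fin (2 * (q - 1)))).card :=
            digitsum_sum_pow q (by omega) μ _
        _ = 2 * (q - 1) := by simp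
    omega
end
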